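/- arXiv:2206.14054 — 7 statements merged into one kernel-verified Lean document; each statement's English description precedes it below -/
import Mathlib

section
/- For every real number s with -1 < s < 0, the improper integral ∫₀^∞ r^s cos(r) dr converges (as a limit of ∫₀^R as R → ∞) and equals -Γ(1+s) sin(sπ/2). -/
/-!
Put `a = -s ∈ (0, 1)`. Writing `x ^ (-a) = Γ(a)⁻¹ ∫₀^∞ t ^ (a - 1) e^{-xt} dt` and exchanging the
integrals turns `∫₀^R x ^ (-a) cos x dx` into
`Γ(a)⁻¹ ∫₀^∞ t ^ (a - 1) (t + e^{-Rt} (sin R - t cos R)) / (1 + t²) dt`.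
Since `|sin R - t cos R| ≤ 1 + t²`, the part carrying `e^{-Rt}` is at most `Γ(a) R ^ (-a)` in
absolute value and vanishes as `R → ∞`. The rest is, after `u = t²` and `x = u / (1 + u)`,
half the Beta integral `B((1 + a) / 2, (1 - a) / 2)`, so equals `π / (2 cos (π a / 2))`, and the
reflection formula `Γ(a) Γ(1 - a) = π / sin (π a)` turns `Γ(a)⁻¹` times it into
`Γ(1 - a) sin (π a / 2)`.
-/

open Real Filter MeasureTheory Set

theorem integrableOn_rpow_mul_exp_neg_mul {a x : ℝ} (ha : 0 < a) (hx : 0 < x) :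
    IntegrableOn (fun t : ℝ => t ^ (a - 1) * exp (-(x * t))) (Ioi 0) := by
  simpa using integrableOn_rpow_mul_exp_neg_mul_rpow (s := a - 1) (by linarith) one_pos hx

theorem integral_rpow_mul_exp_neg_mul_Ioi_eq_Gamma_mul_rpow {a x : ℝ} (ha : 0 < a) (hx : 0 < x) :
    ∫ t in Ioi (0:ℝ), t ^ (a - 1) * exp (-(x * t)) = Gamma a * x ^ (-a) := by
  rw [integral_rpow_mul_exp_neg_mul_Ioi ha hx, one_div, inv_rpow hx.le, rpow_neg hx.le, mul_comm]

theorem integral_exp_neg_mul_mul_cos (t R : ℝ) :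
    ∫ x in (0:ℝ)..R, exp (-(x * t)) * cos x
      = (t + exp (-(R * t)) * (sin R - t * cos R)) / (1 + t ^ 2) := by
  have antideriv : ∀ x : ℝ, HasDerivAt (fun x => exp (-(x * t)) * (sin x - t * cos x) / (1 + t ^ 2))
      (exp (-(x * t)) * cos x) x := by
    intro x
    have hexp : HasDerivAt (fun x => exp (-(x * t))) (exp (-(x * t)) * -t) x := by
      simpa using ((hasDerivAt_id x).mul_const t).neg.exp
    have htrig : HasDerivAt (fun x => sin x - t * cos x) (cos x + t * sin x) x :=
      ((hasDerivAt_sin x).sub ((hasDerivAt_cos x).const_mul t)).congr_deriv (by ring)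
    refine ((hexp.mul htrig).div_const (1 + t ^ 2)).congr_deriv ?_
    field_simp
    ring
  rw [intervalIntegral.integral_eq_sub_of_hasDerivAt (fun x _ => antideriv x)
    (by apply Continuous.intervalIntegrable; fun_prop)]
  simp only [zero_mul, neg_zero, exp_zero, sin_zero, cos_zero, mul_one, zero_sub, mul_neg, one_mul]
  ring

theorem integral_rpow_mul_one_sub_rpow_neg {c : ℝ} (hc0 : 0 < c) (hc1 : c < 1) :
    ∫ x in (0:ℝ)..1, x ^ (c - 1) * (1 - x) ^ (-c) = π / sin (π * c) := by
  have hbeta := Complex.Gamma_mul_Gamma_eq_betaIntegral (s := c) (t := 1 - c)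
    (by simpa using hc0) (by simpa using hc1)
  rw [add_sub_cancel, Complex.Gamma_one, one_mul, Complex.Gamma_mul_Gamma_one_sub] at hbeta
  have hofReal : Complex.betaIntegral c (1 - c)
      = ((∫ x in (0:ℝ)..1, x ^ (c - 1) * (1 - x) ^ (-c) : ℝ) : ℂ) := by
    rw [Complex.betaIntegral, ← intervalIntegral.integral_ofReal]
    refine intervalIntegral.integral_congr fun x hx => ?_
    rw [uIcc_of_le zero_le_one] at hx
    rw [Complex.ofReal_mul, Complex.ofReal_cpow hx.1, Complex.ofReal_cpow (by linarith [hx.2])]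
    push_cast
    ring_nf
  rw [hofReal] at hbeta
  exact_mod_cast hbeta.symm

theorem integral_Ioo_zero_one_eq_integral_Ioi_div_one_add (g : ℝ → ℝ) :
    ∫ x in Ioo (0:ℝ) 1, g x = ∫ u in Ioi (0:ℝ), g (u / (1 + u)) / (1 + u) ^ 2 := by
  have himage : (fun u : ℝ => u / (1 + u)) '' Ioi 0 = Ioo 0 1 := by
    ext y
    constructor
    · rintro ⟨u, hu : 0 < u, rfl⟩
      exact ⟨by positivity, (div_lt_one (by linarith)).2 (by linarith)⟩
    · rintro ⟨hy0, hy1⟩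
      refine ⟨y / (1 - y), div_pos hy0 (by linarith), ?_⟩
      have hy : 1 - y ≠ 0 := by linarith
      field_simp
      ring
  have hderiv : ∀ u ∈ Ioi (0:ℝ),
      HasDerivWithinAt (fun u : ℝ => u / (1 + u)) (1 / (1 + u) ^ 2) (Ioi 0) u := by
    intro u (hu : 0 < u)
    have hden : HasDerivAt (fun u : ℝ => 1 + u) 1 u := (hasDerivAt_id u).const_add 1
    refine (((hasDerivAt_id u).div hden (by linarith)).congr_deriv ?_).hasDerivWithinAt
    simp
  have hinj : InjOn (fun u : ℝ => u / (1 + u)) (Ioi 0) := by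
    intro u (hu : 0 < u) v (hv : 0 < v) h
    field_simp at h
    linarith
  rw [← himage, integral_image_eq_integral_abs_deriv_smul measurableSet_Ioi hderiv hinj]
  refine setIntegral_congr_fun measurableSet_Ioi fun u (hu : 0 < u) => ?_
  rw [abs_of_pos (by positivity), smul_eq_mul]
  ring

theorem integral_rpow_div_one_add_Ioi {c : ℝ} (hc0 : 0 < c) (hc1 : c < 1) :
    ∫ u in Ioi (0:ℝ), u ^ (c - 1) / (1 + u) = π / sin (π * c) := by
  rw [← integral_rpow_mul_one_sub_rpow_neg hc0 hc1, intervalIntegral.integral_of_le zero_le_one,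
    integral_Ioc_eq_integral_Ioo, integral_Ioo_zero_one_eq_integral_Ioi_div_one_add]
  refine setIntegral_congr_fun measurableSet_Ioi fun u (hu : 0 < u) => ?_
  have h1u : 0 < 1 + u := by linarith
  have hsub : 1 - u / (1 + u) = (1 + u)⁻¹ := by field_simp; ring
  have hpow : (1 + u) ^ c = (1 + u) ^ (c - 1) * (1 + u) := by
    rw [← rpow_add_one h1u.ne']; ring_nf
  rw [hsub, div_rpow hu.le h1u.le, inv_rpow h1u.le, rpow_neg h1u.le, inv_inv, hpow]
  have : (1 + u) ^ (c - 1) ≠ 0 := (rpow_pos_of_pos h1u _).ne'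
  field_simp

theorem integrableOn_rpow_div_one_add_sq_Ioi {b : ℝ} (hb1 : -1 < b) (hb2 : b < 1) :
    IntegrableOn (fun t : ℝ => t ^ b / (1 + t ^ 2)) (Ioi 0) := by
  have hmeas : AEStronglyMeasurable (fun t : ℝ => t ^ b / (1 + t ^ 2)) :=
    (by fun_prop : Measurable fun t : ℝ => t ^ b / (1 + t ^ 2)).aestronglyMeasurable
  rw [← Ioc_union_Ioi_eq_Ioi zero_le_one]
  refine IntegrableOn.union ?_ ?_
  · refine Integrable.mono' (intervalIntegral.intervalIntegrable_rpow' hb1).1 hmeas.restrict ?_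
    filter_upwards [ae_restrict_mem measurableSet_Ioc] with t ⟨ht, _⟩
    rw [norm_of_nonneg (by positivity)]
    exact div_le_self (by positivity) (by nlinarith)
  · refine Integrable.mono' (integrableOn_Ioi_rpow_of_lt (by linarith : b - 2 < -1) one_pos)
      hmeas.restrict ?_
    filter_upwards [ae_restrict_mem measurableSet_Ioi] with t (ht : 1 < t)
    rw [norm_of_nonneg (by positivity), rpow_sub (by linarith), rpow_two]
    exact div_le_div_of_nonneg_left (by positivity) (by positivity) (by nlinarith)

theorem integral_rpow_div_one_add_sq_Ioi {b : ℝ} (hb1 : -1 < b) (hb2 : b < 1) :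
    ∫ t in Ioi (0:ℝ), t ^ b / (1 + t ^ 2) = π / (2 * cos (π * b / 2)) := by
  have hsubst :=
    integral_comp_rpow_Ioi_of_pos (g := fun u : ℝ => u ^ ((1 + b) / 2 - 1) / (1 + u)) two_pos
  rw [integral_rpow_div_one_add_Ioi (by linarith) (by linarith),
    show π * ((1 + b) / 2) = π * b / 2 + π / 2 by ring, sin_add_pi_div_two] at hsubst
  suffices h : 2 * ∫ t in Ioi (0:ℝ), t ^ b / (1 + t ^ 2) = π / cos (π * b / 2) by
    rw [mul_comm, ← div_div, ← h]
    ring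
  rw [← hsubst, ← integral_const_mul]
  refine setIntegral_congr_fun measurableSet_Ioi fun t (ht : 0 < t) => ?_
  rw [smul_eq_mul, ← rpow_mul ht.le, show (2:ℝ) - 1 = 1 by norm_num, rpow_one, rpow_two,
    show 2 * ((1 + b) / 2 - 1) = b - 1 by ring, rpow_sub_one ht.ne']
  field_simp

theorem inv_Gamma_mul_pi_div_two_mul_cos {a : ℝ} (ha0 : 0 < a) (ha1 : a < 1) :
    (Gamma a)⁻¹ * (π / (2 * cos (π * a / 2))) = Gamma (1 - a) * sin (π * a / 2) := by
  have hcos : cos (π * a / 2) ≠ 0 :=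
    (cos_pos_of_mem_Ioo ⟨by nlinarith [pi_pos], by nlinarith [pi_pos]⟩).ne'
  have hsin : sin (π * a / 2) ≠ 0 :=
    (sin_pos_of_pos_of_lt_pi (by nlinarith [pi_pos]) (by nlinarith [pi_pos])).ne'
  rw [inv_mul_eq_iff_eq_mul₀ (Gamma_pos_of_pos ha0).ne', ← mul_assoc, Gamma_mul_Gamma_one_sub,
    show π * a = 2 * (π * a / 2) by ring, sin_two_mul]
  field_simp

theorem abs_sin_sub_mul_cos_le (R t : ℝ) : |sin R - t * cos R| ≤ 1 + t ^ 2 := by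
  apply abs_le_of_sq_le_sq _ (by positivity)
  nlinarith [sq_nonneg (t * sin R + cos R), sin_sq_add_cos_sq R, sq_nonneg t]

theorem norm_rpow_mul_exp_neg_mul_mul_sin_sub_le (a R : ℝ) {t : ℝ} (ht : 0 < t) :
    ‖t ^ (a - 1) * exp (-(R * t)) * ((sin R - t * cos R) / (1 + t ^ 2))‖
      ≤ t ^ (a - 1) * exp (-(R * t)) := by
  rw [norm_mul, norm_of_nonneg (by positivity), norm_div,
    norm_of_nonneg (by positivity : 0 ≤ 1 + t ^ 2)]
  exact mul_le_of_le_one_right (by positivity)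
    ((div_le_one (by positivity)).2 (abs_sin_sub_mul_cos_le R t))

theorem integrableOn_rpow_mul_exp_neg_mul_mul_sin_sub {a R : ℝ} (ha : 0 < a) (hR : 0 < R) :
    IntegrableOn (fun t : ℝ => t ^ (a - 1) * exp (-(R * t)) * ((sin R - t * cos R) / (1 + t ^ 2)))
      (Ioi 0) := by
  refine Integrable.mono' (integrableOn_rpow_mul_exp_neg_mul ha hR)
    (by fun_prop : Measurable _).aestronglyMeasurable ?_
  filter_upwards [ae_restrict_mem measurableSet_Ioi] with t ht
  exact norm_rpow_mul_exp_neg_mul_mul_sin_sub_le a R ht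

theorem tendsto_integral_rpow_mul_exp_neg_mul_mul_sin_sub {a : ℝ} (ha : 0 < a) :
    Tendsto (fun R : ℝ =>
      ∫ t in Ioi (0:ℝ), t ^ (a - 1) * exp (-(R * t)) * ((sin R - t * cos R) / (1 + t ^ 2)))
      atTop (nhds 0) := by
  have hbound : Tendsto (fun R : ℝ => Gamma a * R ^ (-a)) atTop (nhds 0) := by
    simpa using (tendsto_rpow_neg_atTop ha).const_mul (Gamma a)
  refine squeeze_zero_norm' ?_ hbound
  filter_upwards [eventually_gt_atTop 0] with R hR
  rw [← integral_rpow_mul_exp_neg_mul_Ioi_eq_Gamma_mul_rpow ha hR]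
  refine norm_integral_le_of_norm_le (integrableOn_rpow_mul_exp_neg_mul ha hR) ?_
  filter_upwards [ae_restrict_mem measurableSet_Ioi] with t ht
  exact norm_rpow_mul_exp_neg_mul_mul_sin_sub_le a R ht

theorem integrable_rpow_mul_exp_neg_mul_mul_cos_prod {a : ℝ} (ha0 : 0 < a) (ha1 : a < 1)
    (R : ℝ) :
    Integrable (Function.uncurry fun x t : ℝ => t ^ (a - 1) * exp (-(x * t)) * cos x)
      ((volume.restrict (Ioc 0 R)).prod (volume.restrict (Ioi 0))) := by
  have hmeas : AEStronglyMeasurable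
      (Function.uncurry fun x t : ℝ => t ^ (a - 1) * exp (-(x * t)) * cos x)
      ((volume.restrict (Ioc 0 R)).prod (volume.restrict (Ioi 0))) :=
    (by fun_prop : Measurable fun p : ℝ × ℝ =>
      p.2 ^ (a - 1) * exp (-(p.1 * p.2)) * cos p.1).aestronglyMeasurable
  rw [integrable_prod_iff hmeas]
  constructor
  · filter_upwards [ae_restrict_mem measurableSet_Ioc] with x hx
    exact (integrableOn_rpow_mul_exp_neg_mul ha0 hx.1).mul_const (cos x)
  · have hnorm : ∀ x ∈ Ioc (0:ℝ) R, ∫ t in Ioi (0:ℝ), ‖t ^ (a - 1) * exp (-(x * t)) * cos x‖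
        = |cos x| * (Gamma a * x ^ (-a)) := by
      intro x hx
      rw [← integral_rpow_mul_exp_neg_mul_Ioi_eq_Gamma_mul_rpow ha0 hx.1, ← integral_const_mul]
      refine setIntegral_congr_fun measurableSet_Ioi fun t (ht : 0 < t) => ?_
      rw [norm_mul, norm_mul, norm_of_nonneg (by positivity), norm_of_nonneg (by positivity),
        Real.norm_eq_abs]
      ring
    have hrpow : IntegrableOn (fun x : ℝ => Gamma a * x ^ (-a)) (Ioc 0 R) :=
      ((intervalIntegral.intervalIntegrable_rpow' (by linarith : -1 < -a)).1).const_mul _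
    refine (hrpow.bdd_mul (f := fun x => |cos x|) (c := 1) (by fun_prop) ?_).congr ?_
    · exact Eventually.of_forall fun x => by simpa using abs_cos_le_one x
    · filter_upwards [ae_restrict_mem measurableSet_Ioc] with x hx
      exact (hnorm x hx).symm

theorem integral_rpow_neg_mul_cos_eq {a R : ℝ} (ha0 : 0 < a) (ha1 : a < 1) (hR : 0 < R) :
    ∫ x in (0:ℝ)..R, x ^ (-a) * cos x
      = (Gamma a)⁻¹ * ((∫ t in Ioi (0:ℝ), t ^ a / (1 + t ^ 2)) + ∫ t in Ioi (0:ℝ),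
          t ^ (a - 1) * exp (-(R * t)) * ((sin R - t * cos R) / (1 + t ^ 2))) := by
  have hinner : ∀ t ∈ Ioi (0:ℝ), ∫ x in Ioc 0 R, t ^ (a - 1) * exp (-(x * t)) * cos x
      = t ^ a / (1 + t ^ 2)
        + t ^ (a - 1) * exp (-(R * t)) * ((sin R - t * cos R) / (1 + t ^ 2)) := by
    intro t (ht : 0 < t)
    simp_rw [mul_assoc]
    rw [integral_const_mul, ← intervalIntegral.integral_of_le hR.le, integral_exp_neg_mul_mul_cos,
      rpow_sub_one ht.ne']
    field_simp
  calc ∫ x in (0:ℝ)..R, x ^ (-a) * cos x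
      = ∫ x in Ioc 0 R, (Gamma a)⁻¹ * ∫ t in Ioi (0:ℝ), t ^ (a - 1) * exp (-(x * t)) * cos x := by
        rw [intervalIntegral.integral_of_le hR.le]
        refine setIntegral_congr_fun measurableSet_Ioc fun x hx => ?_
        rw [integral_mul_const, integral_rpow_mul_exp_neg_mul_Ioi_eq_Gamma_mul_rpow ha0 hx.1]
        field_simp [(Gamma_pos_of_pos ha0).ne']
    _ = (Gamma a)⁻¹ * ∫ t in Ioi (0:ℝ), ∫ x in Ioc 0 R, t ^ (a - 1) * exp (-(x * t)) * cos x := by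
        rw [integral_const_mul,
          integral_integral_swap (integrable_rpow_mul_exp_neg_mul_mul_cos_prod ha0 ha1 R)]
    _ = _ := by
        rw [setIntegral_congr_fun measurableSet_Ioi hinner,
          integral_add (integrableOn_rpow_div_one_add_sq_Ioi (by linarith) ha1)
            (integrableOn_rpow_mul_exp_neg_mul_mul_sin_sub ha0 hR)]

theorem improper_integral_rpow_cos (s : ℝ) (hs1 : -1 < s) (hs0 : s < 0) :
    Tendsto (fun R : ℝ => ∫ r in (0:ℝ)..R, r ^ s * Real.cos r) atTop
      (nhds (-(Real.Gamma (1 + s)) * Real.sin (s * π / 2))) := by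
  obtain ⟨a, rfl⟩ : ∃ a, s = -a := ⟨-s, (neg_neg s).symm⟩
  have ha0 : 0 < a := by linarith
  have ha1 : a < 1 := by linarith
  have hlimit : -(Gamma (1 + -a)) * sin (-a * π / 2)
      = (Gamma a)⁻¹ * ((∫ t in Ioi (0:ℝ), t ^ a / (1 + t ^ 2)) + 0) := by
    rw [add_zero, integral_rpow_div_one_add_sq_Ioi (by linarith) ha1,
      inv_Gamma_mul_pi_div_two_mul_cos ha0 ha1, ← sub_eq_add_neg,
      show -a * π / 2 = -(π * a / 2) by ring, sin_neg]
    ring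
  rw [hlimit]
  refine ((tendsto_const_nhds.add
    (tendsto_integral_rpow_mul_exp_neg_mul_mul_sin_sub ha0)).const_mul _).congr' ?_
  filter_upwards [eventually_gt_atTop 0] with R hR
  exact (integral_rpow_neg_mul_cos_eq ha0 ha1 hR).symm
end

section
/- Let 0 < s < 3, t > 0, and let w : [0,π] → ℝ be defined by w(φ) = sin φ · (sin²φ + t² cos²φ)^{-(2+s)/2} · Ω̃(φ) where Ω̃ : [0,π] → ℝ is continuous with Ω̃ ≥ c > 0. Define f(t) = (∫₀^π sin²φ · w(φ) dφ) / (2 ∫₀^π cos²φ · w(φ) dφ). Then f(t) → 0 as t → 0⁺ and f(t) → ∞ as t → ∞, and consequently there exists t > 0 with f(t) = 1. -/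
/-!
Write `B(t, φ) = sin² φ + t² cos² φ`. As `t → 0⁺` the denominator picks up
mass `≳ t^(-s)` from `φ ∈ [t/2, t]`, where `B ≤ 2t²`, while `sin³ φ ≤ B^(3/2)` keeps the numerator
`O(1 + t^(1-s))`; hence `f(t) = O(t^s + t)`. As `t → ∞`, `t² cos² φ ≤ B` and `B ≥ 1` make the
denominator `O(t⁻²)`, while the window `|φ - π/2| ≤ 1/t`, where `B ≤ 2`, gives the numerator
`≳ 1/t`; hence `f(t) ≳ t`. The integrand is jointly continuous in `(t, φ)` for `t ≠ 0`, so `f` is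
continuous on `(0, ∞)` and takes the value `1` by the intermediate value theorem.
-/

open Real Filter Set MeasureTheory intervalIntegral Topology

theorem continuousOn_intervalIntegral_of_continuousOn_uncurry {X E : Type*} [TopologicalSpace X]
    [NormedAddCommGroup E] [NormedSpace ℝ E] {F : X → ℝ → E} {U : Set X} {a b : ℝ}
    (hab : a ≤ b) (hF : ContinuousOn (Function.uncurry F) (U ×ˢ Icc a b)) :
    ContinuousOn (fun t => ∫ x in a..b, F t x) U := by
  let G : U → ℝ → E := fun t x => F t (projIcc a b hab x)
  have hG : Continuous (Function.uncurry G) :=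
    hF.comp_continuous (f := fun p : U × ℝ => ((p.1 : X), (projIcc a b hab p.2 : ℝ)))
      (by fun_prop) fun p => ⟨p.1.2, (projIcc a b hab p.2).2⟩
  rw [continuousOn_iff_continuous_domRestrict]
  refine (continuous_parametric_intervalIntegral_of_continuous' hG a b).congr fun t =>
    integral_congr fun x hx => ?_
  rw [uIcc_of_le hab] at hx
  simp [G, projIcc_of_mem hab hx]

theorem mul_sub_le_integral_of_nonneg_of_le_on {g : ℝ → ℝ} {a a' b' b m : ℝ} (ha : a ≤ a')
    (hab : a' ≤ b') (hb : b' ≤ b) (hg : IntervalIntegrable g volume a b)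
    (hg0 : ∀ x ∈ Icc a b, 0 ≤ g x) (hm : ∀ x ∈ Icc a' b', m ≤ g x) :
    m * (b' - a') ≤ ∫ x in a..b, g x :=
  calc m * (b' - a') = ∫ _ in a'..b', m := by simp [mul_comm]
    _ ≤ ∫ x in a'..b', g x := by
      refine integral_mono_on hab intervalIntegrable_const (hg.mono_set ?_) hm
      rw [uIcc_of_le hab, uIcc_of_le (ha.trans (hab.trans hb))]
      exact Icc_subset_Icc ha hb
    _ ≤ ∫ x in a..b, g x :=
      integral_mono_interval ha hab hb
        (ae_restrict_of_forall_mem measurableSet_Ioc fun x hx => hg0 x (Ioc_subset_Icc_self hx)) hg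

noncomputable section

namespace EllipsoidRatio

def ellipseForm (t φ : ℝ) : ℝ := sin φ ^ 2 + t ^ 2 * cos φ ^ 2

def weight (s : ℝ) (Ω : ℝ → ℝ) (t φ : ℝ) : ℝ :=
  sin φ * ellipseForm t φ ^ (-(2 + s) / 2) * Ω φ

def ratio (s : ℝ) (Ω : ℝ → ℝ) (t : ℝ) : ℝ :=
  (∫ φ in (0)..π, sin φ ^ 2 * weight s Ω t φ) / (2 * ∫ φ in (0)..π, cos φ ^ 2 * weight s Ω t φ)

section EllipseForm

variable {t φ : ℝ}

theorem continuous_ellipseForm : Continuous fun p : ℝ × ℝ => ellipseForm p.1 p.2 := by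
  unfold ellipseForm; fun_prop

theorem sin_sq_le_ellipseForm (t φ : ℝ) : sin φ ^ 2 ≤ ellipseForm t φ :=
  le_add_of_nonneg_right (by positivity)

theorem ellipseForm_nonneg (t φ : ℝ) : 0 ≤ ellipseForm t φ := by
  unfold ellipseForm; positivity

-- `ellipseForm t φ` is a convex combination of `1` and `t ^ 2`, with weights `sin² φ`, `cos² φ`.
theorem min_le_ellipseForm (t φ : ℝ) : min 1 (t ^ 2) ≤ ellipseForm t φ := by
  have h1 := mul_nonneg (sq_nonneg (sin φ)) (sub_nonneg.2 (min_le_left 1 (t ^ 2)))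
  have h2 := mul_nonneg (sq_nonneg (cos φ)) (sub_nonneg.2 (min_le_right 1 (t ^ 2)))
  have : ellipseForm t φ - min 1 (t ^ 2) =
      sin φ ^ 2 * (1 - min 1 (t ^ 2)) + cos φ ^ 2 * (t ^ 2 - min 1 (t ^ 2)) := by
    unfold ellipseForm; linear_combination min 1 (t ^ 2) * sin_sq_add_cos_sq φ
  linarith

theorem ellipseForm_le_max (t φ : ℝ) : ellipseForm t φ ≤ max 1 (t ^ 2) := by
  have h1 := mul_nonneg (sq_nonneg (sin φ)) (sub_nonneg.2 (le_max_left 1 (t ^ 2)))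
  have h2 := mul_nonneg (sq_nonneg (cos φ)) (sub_nonneg.2 (le_max_right 1 (t ^ 2)))
  have : max 1 (t ^ 2) - ellipseForm t φ =
      sin φ ^ 2 * (max 1 (t ^ 2) - 1) + cos φ ^ 2 * (max 1 (t ^ 2) - t ^ 2) := by
    unfold ellipseForm; linear_combination -max 1 (t ^ 2) * sin_sq_add_cos_sq φ
  linarith

theorem ellipseForm_pos (ht : t ≠ 0) (φ : ℝ) : 0 < ellipseForm t φ :=
  (lt_min one_pos (by positivity)).trans_le (min_le_ellipseForm t φ)

theorem ellipseForm_rpow_le (ht0 : 0 < t) (ht1 : t ≤ 1) (a φ : ℝ) :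
    ellipseForm t φ ^ a ≤ 1 + t ^ (2 * a) := by
  have hsq : t ^ 2 ≤ 1 := pow_le_one₀ ht0.le ht1
  have htpow : 0 ≤ t ^ (2 * a) := rpow_nonneg ht0.le _
  rcases le_total 0 a with ha | ha
  · have hB : ellipseForm t φ ≤ 1 := by simpa [hsq] using ellipseForm_le_max t φ
    linarith [rpow_le_one (ellipseForm_nonneg t φ) hB ha]
  · have hB : t ^ 2 ≤ ellipseForm t φ := by simpa [hsq] using min_le_ellipseForm t φ
    have : (t ^ 2) ^ a = t ^ (2 * a) := by
      rw [← rpow_natCast, ← rpow_mul ht0.le]; norm_num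
    linarith [rpow_le_rpow_of_nonpos (by positivity) hB ha]

theorem sin_pow_three_mul_rpow_le (ht : t ≠ 0) (hφ : 0 ≤ sin φ) (a : ℝ) :
    sin φ ^ 3 * ellipseForm t φ ^ a ≤ ellipseForm t φ ^ (a + 3 / 2) := by
  have hsin : sin φ ^ 3 = (sin φ ^ 2) ^ (3 / 2 : ℝ) := by
    rw [← rpow_natCast, ← rpow_natCast, ← rpow_mul hφ]; norm_num
  rw [rpow_add (ellipseForm_pos ht φ), mul_comm (ellipseForm t φ ^ a), hsin]
  exact mul_le_mul_of_nonneg_right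
    (rpow_le_rpow (sq_nonneg _) (sin_sq_le_ellipseForm t φ) (by norm_num))
    (rpow_nonneg (ellipseForm_nonneg t φ) a)

theorem cos_sq_mul_rpow_le (ht : t ≠ 0) (a : ℝ) :
    cos φ ^ 2 * ellipseForm t φ ^ a ≤ ellipseForm t φ ^ (a + 1) / t ^ 2 := by
  have hcos : cos φ ^ 2 ≤ ellipseForm t φ / t ^ 2 := by
    rw [le_div_iff₀ (by positivity)]
    unfold ellipseForm
    nlinarith [sq_nonneg (sin φ)]
  calc cos φ ^ 2 * ellipseForm t φ ^ a ≤ ellipseForm t φ / t ^ 2 * ellipseForm t φ ^ a :=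
        mul_le_mul_of_nonneg_right hcos (rpow_nonneg (ellipseForm_nonneg t φ) a)
    _ = ellipseForm t φ ^ (a + 1) / t ^ 2 := by
        rw [rpow_add_one (ellipseForm_pos ht φ).ne']; ring

end EllipseForm

section Weight

variable {s : ℝ} {Ω ψ : ℝ → ℝ} {t φ : ℝ}

theorem weight_nonneg (hΩ : ∀ φ ∈ Icc 0 π, 0 ≤ Ω φ) (hφ : φ ∈ Icc 0 π) :
    0 ≤ weight s Ω t φ :=
  mul_nonneg (mul_nonneg (sin_nonneg_of_nonneg_of_le_pi hφ.1 hφ.2)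
    (rpow_nonneg (ellipseForm_nonneg t φ) _)) (hΩ φ hφ)

theorem weight_pos (hΩ : ∀ φ ∈ Icc 0 π, 0 < Ω φ) (ht : t ≠ 0) (hφ : φ ∈ Ioo 0 π) :
    0 < weight s Ω t φ :=
  mul_pos (mul_pos (sin_pos_of_pos_of_lt_pi hφ.1 hφ.2) (rpow_pos_of_pos (ellipseForm_pos ht φ) _))
    (hΩ φ (Ioo_subset_Icc_self hφ))

theorem mul_rpow_mul_le_weight (hs : -2 ≤ s) (ht : t ≠ 0) {a X c : ℝ} (ha : 0 ≤ a)
    (hc : 0 ≤ c) (hsin : a ≤ sin φ) (hB : ellipseForm t φ ≤ X) (hΩ : c ≤ Ω φ) :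
    a * X ^ (-(2 + s) / 2) * c ≤ weight s Ω t φ := by
  have hX := (ellipseForm_pos ht φ).trans_le hB
  have hker : X ^ (-(2 + s) / 2) ≤ ellipseForm t φ ^ (-(2 + s) / 2) :=
    rpow_le_rpow_of_nonpos (ellipseForm_pos ht φ) hB (by linarith)
  exact mul_le_mul (mul_le_mul hsin hker (rpow_nonneg hX.le _) (ha.trans hsin)) hΩ hc
    (mul_nonneg (ha.trans hsin) (rpow_nonneg (ellipseForm_nonneg t φ) _))

theorem continuousOn_weight (hΩ : ContinuousOn Ω (Icc 0 π)) :
    ContinuousOn (Function.uncurry (weight s Ω)) ({0}ᶜ ×ˢ Icc 0 π) := by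
  have hB : ContinuousOn (fun p : ℝ × ℝ => ellipseForm p.1 p.2 ^ (-(2 + s) / 2))
      ({0}ᶜ ×ˢ Icc 0 π) :=
    continuous_ellipseForm.continuousOn.rpow_const fun p hp =>
      Or.inl (ellipseForm_pos hp.1 p.2).ne'
  exact ((continuous_sin.comp continuous_snd).continuousOn.mul hB).mul
    (hΩ.comp continuous_snd.continuousOn fun p hp => hp.2)

theorem continuousOn_mul_weight (hΩ : ContinuousOn Ω (Icc 0 π)) (hψ : Continuous ψ) :
    ContinuousOn (fun p : ℝ × ℝ => ψ p.2 * weight s Ω p.1 p.2) ({0}ᶜ ×ˢ Icc 0 π) :=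
  (hψ.comp continuous_snd).continuousOn.mul (continuousOn_weight hΩ)

theorem intervalIntegrable_mul_weight (hΩ : ContinuousOn Ω (Icc 0 π)) (hψ : Continuous ψ)
    (ht : t ≠ 0) : IntervalIntegrable (fun φ => ψ φ * weight s Ω t φ) volume 0 π := by
  refine ContinuousOn.intervalIntegrable ?_
  rw [uIcc_of_le pi_pos.le]
  exact (continuousOn_mul_weight hΩ hψ).comp (by fun_prop : Continuous fun φ => (t, φ)).continuousOn
    fun φ hφ => ⟨ht, hφ⟩

theorem continuousOn_integral_mul_weight (hΩ : ContinuousOn Ω (Icc 0 π)) (hψ : Continuous ψ) :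
    ContinuousOn (fun t => ∫ φ in (0)..π, ψ φ * weight s Ω t φ) {0}ᶜ :=
  continuousOn_intervalIntegral_of_continuousOn_uncurry pi_pos.le (continuousOn_mul_weight hΩ hψ)

theorem integral_cos_sq_mul_weight_pos (hΩ : ContinuousOn Ω (Icc 0 π))
    (hΩ0 : ∀ φ ∈ Icc 0 π, 0 < Ω φ) (ht : t ≠ 0) :
    0 < ∫ φ in (0)..π, cos φ ^ 2 * weight s Ω t φ := by
  have hi := intervalIntegrable_mul_weight (s := s) hΩ (continuous_cos.pow 2) ht
  have hπ : 0 < π / 2 := by positivity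
  have hpos : 0 < ∫ φ in (0)..π / 2, cos φ ^ 2 * weight s Ω t φ := by
    refine intervalIntegral_pos_of_pos_on (hi.mono_set ?_) (fun φ hφ => ?_) hπ
    · rw [uIcc_of_le hπ.le, uIcc_of_le pi_pos.le]
      exact Icc_subset_Icc_right (by linarith [pi_pos])
    · have hcos : 0 < cos φ := cos_pos_of_mem_Ioo ⟨by linarith [hφ.1], hφ.2⟩
      exact mul_pos (pow_pos hcos 2)
        (weight_pos hΩ0 ht ⟨hφ.1, hφ.2.trans (by linarith [pi_pos])⟩)
  refine hpos.trans_le (integral_mono_interval le_rfl hπ.le (by linarith [pi_pos]) ?_ hi)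
  refine ae_restrict_of_forall_mem measurableSet_Ioc fun φ hφ => ?_
  exact mul_nonneg (sq_nonneg _)
    (weight_nonneg (fun φ hφ => (hΩ0 φ hφ).le) (Ioc_subset_Icc_self hφ))

end Weight

section Bounds

variable {s c M : ℝ} {Ω : ℝ → ℝ} {t : ℝ}

theorem integral_sin_sq_mul_weight_le (hΩ : ContinuousOn Ω (Icc 0 π))
    (hΩ0 : ∀ φ ∈ Icc 0 π, 0 ≤ Ω φ) (hΩM : ∀ φ ∈ Icc 0 π, Ω φ ≤ M) (ht0 : 0 < t) (ht1 : t ≤ 1) :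
    ∫ φ in (0)..π, sin φ ^ 2 * weight s Ω t φ ≤ π * ((1 + t ^ (1 - s)) * M) := by
  have hpt : ∀ φ ∈ Icc 0 π, sin φ ^ 2 * weight s Ω t φ ≤ (1 + t ^ (1 - s)) * M := by
    intro φ hφ
    have hsin := sin_nonneg_of_nonneg_of_le_pi hφ.1 hφ.2
    have hker : sin φ ^ 3 * ellipseForm t φ ^ (-(2 + s) / 2) ≤ 1 + t ^ (1 - s) :=
      calc _ ≤ ellipseForm t φ ^ (-(2 + s) / 2 + 3 / 2) :=
            sin_pow_three_mul_rpow_le ht0.ne' hsin _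
        _ ≤ 1 + t ^ (2 * (-(2 + s) / 2 + 3 / 2)) := ellipseForm_rpow_le ht0 ht1 _ φ
        _ = 1 + t ^ (1 - s) := by ring_nf
    calc sin φ ^ 2 * weight s Ω t φ = sin φ ^ 3 * ellipseForm t φ ^ (-(2 + s) / 2) * Ω φ := by
          unfold weight; ring
      _ ≤ (1 + t ^ (1 - s)) * M :=
          mul_le_mul hker (hΩM φ hφ) (hΩ0 φ hφ) (by positivity)
  calc _ ≤ ∫ _ in (0)..π, (1 + t ^ (1 - s)) * M :=
        integral_mono_on pi_pos.le
          (intervalIntegrable_mul_weight hΩ (continuous_sin.pow 2) ht0.ne')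
          intervalIntegrable_const hpt
    _ = π * ((1 + t ^ (1 - s)) * M) := by
        rw [intervalIntegral.integral_const, smul_eq_mul, sub_zero]

theorem integral_cos_sq_mul_weight_le (hs : 0 ≤ s) (hΩ : ContinuousOn Ω (Icc 0 π))
    (hΩ0 : ∀ φ ∈ Icc 0 π, 0 ≤ Ω φ) (hΩM : ∀ φ ∈ Icc 0 π, Ω φ ≤ M) (ht : 1 ≤ t) :
    ∫ φ in (0)..π, cos φ ^ 2 * weight s Ω t φ ≤ π * (M / t ^ 2) := by
  have ht0 : t ≠ 0 := (zero_lt_one.trans_le ht).ne'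
  have hpt : ∀ φ ∈ Icc 0 π, cos φ ^ 2 * weight s Ω t φ ≤ M / t ^ 2 := by
    intro φ hφ
    have hB : 1 ≤ ellipseForm t φ := by
      simpa [one_le_pow₀ ht] using min_le_ellipseForm t φ
    have hker : cos φ ^ 2 * ellipseForm t φ ^ (-(2 + s) / 2) ≤ 1 / t ^ 2 :=
      calc _ ≤ ellipseForm t φ ^ (-(2 + s) / 2 + 1) / t ^ 2 := cos_sq_mul_rpow_le ht0 _
        _ ≤ 1 / t ^ 2 := by
            gcongr
            exact rpow_le_one_of_one_le_of_nonpos hB (by linarith)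
    have hsinΩ : sin φ * Ω φ ≤ M :=
      (mul_le_of_le_one_left (hΩ0 φ hφ) (sin_le_one φ)).trans (hΩM φ hφ)
    calc cos φ ^ 2 * weight s Ω t φ
        = cos φ ^ 2 * ellipseForm t φ ^ (-(2 + s) / 2) * (sin φ * Ω φ) := by
          unfold weight; ring
      _ ≤ 1 / t ^ 2 * M :=
          mul_le_mul hker hsinΩ
            (mul_nonneg (sin_nonneg_of_nonneg_of_le_pi hφ.1 hφ.2) (hΩ0 φ hφ)) (by positivity)
      _ = M / t ^ 2 := by ring
  calc _ ≤ ∫ _ in (0)..π, M / t ^ 2 :=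
        integral_mono_on pi_pos.le
          (intervalIntegrable_mul_weight hΩ (continuous_cos.pow 2) ht0)
          intervalIntegrable_const hpt
    _ = π * (M / t ^ 2) := by rw [intervalIntegral.integral_const, smul_eq_mul, sub_zero]

theorem le_integral_cos_sq_mul_weight (hs : -2 ≤ s) (hΩ : ContinuousOn Ω (Icc 0 π))
    (hc : 0 ≤ c) (hcΩ : ∀ φ ∈ Icc 0 π, c ≤ Ω φ) (ht0 : 0 < t) (ht1 : t ≤ 1 / 2) :
    3 / 32 * c * 2 ^ (-(2 + s) / 2) * t ^ (-s) ≤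
      ∫ φ in (0)..π, cos φ ^ 2 * weight s Ω t φ := by
  have hΩ0 : ∀ φ ∈ Icc 0 π, 0 ≤ Ω φ := fun φ hφ => hc.trans (hcΩ φ hφ)
  have hpt : ∀ φ ∈ Icc (t / 2) t,
      3 / 4 * (t / 4 * (2 * t ^ 2) ^ (-(2 + s) / 2) * c) ≤ cos φ ^ 2 * weight s Ω t φ := by
    intro φ hφ
    have hφ0 : 0 ≤ φ := by linarith [hφ.1]
    have hsin : t / 4 ≤ sin φ := by
      have h2π : 1 / 2 ≤ 2 / π := by
        rw [div_le_div_iff₀ two_pos pi_pos]; linarith [pi_le_four]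
      have := mul_le_sin hφ0 (by linarith [hφ.2, pi_gt_three])
      nlinarith [hφ.1]
    have hsin_sq : sin φ ^ 2 ≤ t ^ 2 := sin_sq_le_sq.trans (pow_le_pow_left₀ hφ0 hφ.2 2)
    have hcos : 3 / 4 ≤ cos φ ^ 2 := by nlinarith [sin_sq_add_cos_sq φ]
    have hB : ellipseForm t φ ≤ 2 * t ^ 2 := by
      unfold ellipseForm; nlinarith [cos_sq_le_one φ]
    have hφπ : φ ∈ Icc 0 π := ⟨hφ0, by linarith [hφ.2, pi_gt_three]⟩
    exact mul_le_mul hcos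
      (mul_rpow_mul_le_weight hs ht0.ne' (by positivity) hc hsin hB (hcΩ φ hφπ))
      (by positivity) (sq_nonneg _)
  have hint := mul_sub_le_integral_of_nonneg_of_le_on (by linarith) (by linarith)
    (by linarith [pi_gt_three]) (intervalIntegrable_mul_weight hΩ (continuous_cos.pow 2) ht0.ne')
    (fun φ hφ => mul_nonneg (sq_nonneg _) (weight_nonneg hΩ0 hφ)) hpt
  have hpow : (2 * t ^ 2) ^ (-(2 + s) / 2) * t ^ 2 = 2 ^ (-(2 + s) / 2) * t ^ (-s) := by
    rw [mul_rpow zero_le_two (sq_nonneg t), ← rpow_natCast t 2, ← rpow_mul ht0.le, mul_assoc,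
      ← rpow_add ht0]
    congr 2
    push_cast
    ring
  calc 3 / 32 * c * 2 ^ (-(2 + s) / 2) * t ^ (-s)
        = 3 / 4 * (t / 4 * (2 * t ^ 2) ^ (-(2 + s) / 2) * c) * (t - t / 2) := by
        linear_combination (-(3 / 32) * c) * hpow
    _ ≤ _ := hint

theorem le_integral_sin_sq_mul_weight (hs : -2 ≤ s) (hΩ : ContinuousOn Ω (Icc 0 π))
    (hc : 0 ≤ c) (hcΩ : ∀ φ ∈ Icc 0 π, c ≤ Ω φ) (ht : 2 ≤ t) :
    2 ^ (-(2 + s) / 2) * c / (4 * t) ≤ ∫ φ in (0)..π, sin φ ^ 2 * weight s Ω t φ := by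
  have ht0 : 0 < t := by linarith
  have hΩ0 : ∀ φ ∈ Icc 0 π, 0 ≤ Ω φ := fun φ hφ => hc.trans (hcΩ φ hφ)
  have hinv : 1 / t ≤ 1 / 2 := one_div_le_one_div_of_le two_pos ht
  have hinv0 : 0 < 1 / t := by positivity
  have hpt : ∀ φ ∈ Icc (π / 2 - 1 / t) (π / 2 + 1 / t),
      1 / 4 * (1 / 2 * 2 ^ (-(2 + s) / 2) * c) ≤ sin φ ^ 2 * weight s Ω t φ := by
    intro φ hφ
    have hx : (π / 2 - φ) ^ 2 ≤ (1 / t) ^ 2 := sq_le_sq' (by linarith [hφ.2]) (by linarith [hφ.1])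
    have hsin : 1 / 2 ≤ sin φ := by
      have := one_sub_sq_div_two_le_cos (x := π / 2 - φ)
      rw [cos_pi_div_two_sub] at this
      nlinarith
    have hcos : t ^ 2 * cos φ ^ 2 ≤ 1 := by
      have := sin_sq_le_sq (x := π / 2 - φ)
      rw [sin_pi_div_two_sub] at this
      calc t ^ 2 * cos φ ^ 2 ≤ t ^ 2 * (1 / t) ^ 2 :=
            mul_le_mul_of_nonneg_left (this.trans hx) (sq_nonneg t)
        _ = 1 := by field_simp
    have hB : ellipseForm t φ ≤ 2 := by
      unfold ellipseForm; linarith [sin_sq_le_one φ]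
    have hφπ : φ ∈ Icc 0 π := ⟨by linarith [hφ.1, pi_gt_three], by linarith [hφ.2, pi_gt_three]⟩
    exact mul_le_mul (by nlinarith) (mul_rpow_mul_le_weight hs ht0.ne' (by norm_num) hc hsin hB
      (hcΩ φ hφπ)) (by positivity) (sq_nonneg _)
  have hint := mul_sub_le_integral_of_nonneg_of_le_on (by linarith [pi_gt_three]) (by linarith)
    (by linarith [pi_gt_three]) (intervalIntegrable_mul_weight hΩ (continuous_sin.pow 2) ht0.ne')
    (fun φ hφ => mul_nonneg (sq_nonneg _) (weight_nonneg hΩ0 hφ)) hpt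
  calc 2 ^ (-(2 + s) / 2) * c / (4 * t)
        = 1 / 4 * (1 / 2 * 2 ^ (-(2 + s) / 2) * c) * (π / 2 + 1 / t - (π / 2 - 1 / t)) := by
        field_simp; ring
    _ ≤ _ := hint

end Bounds

section Ratio

variable {s c M : ℝ} {Ω : ℝ → ℝ}

theorem continuousOn_ratio (hΩ : ContinuousOn Ω (Icc 0 π)) (hΩ0 : ∀ φ ∈ Icc 0 π, 0 < Ω φ) :
    ContinuousOn (ratio s Ω) {0}ᶜ :=
  (continuousOn_integral_mul_weight hΩ (continuous_sin.pow 2)).div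
    (continuousOn_const.mul (continuousOn_integral_mul_weight hΩ (continuous_cos.pow 2)))
    fun _ ht => mul_ne_zero two_ne_zero (integral_cos_sq_mul_weight_pos hΩ hΩ0 ht).ne'

theorem tendsto_ratio_nhdsGT_zero (hs : 0 < s) (hΩ : ContinuousOn Ω (Icc 0 π)) (hc : 0 < c)
    (hcΩ : ∀ φ ∈ Icc 0 π, c ≤ Ω φ) (hΩM : ∀ φ ∈ Icc 0 π, Ω φ ≤ M) :
    Tendsto (ratio s Ω) (𝓝[>] 0) (𝓝 0) := by
  have hΩ0 : ∀ φ ∈ Icc 0 π, 0 < Ω φ := fun φ hφ => hc.trans_le (hcΩ φ hφ)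
  have hM : 0 < M := (hΩ0 0 ⟨le_rfl, pi_pos.le⟩).trans_le (hΩM 0 ⟨le_rfl, pi_pos.le⟩)
  set K := π * M / (2 * (3 / 32 * c * 2 ^ (-(2 + s) / 2)))
  have hbound : ∀ t ∈ Ioc (0 : ℝ) (1 / 2), ratio s Ω t ≤ K * (t ^ s + t) := by
    rintro t ⟨ht0, ht⟩
    have hN := integral_sin_sq_mul_weight_le (s := s) hΩ (fun φ hφ => (hΩ0 φ hφ).le) hΩM ht0
      (by linarith)
    have hD := le_integral_cos_sq_mul_weight (s := s) (by linarith) hΩ hc.le hcΩ ht0 ht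
    have hts : (1 + t ^ (1 - s)) / t ^ (-s) = t ^ s + t := by
      rw [rpow_neg ht0.le, rpow_sub ht0, rpow_one]
      field_simp
    calc ratio s Ω t ≤ π * ((1 + t ^ (1 - s)) * M) /
          (2 * (3 / 32 * c * 2 ^ (-(2 + s) / 2) * t ^ (-s))) :=
          div_le_div₀ (by positivity) hN (by positivity) (by linarith)
      _ = K * (t ^ s + t) := by rw [← hts]; ring
  have hK : Tendsto (fun t : ℝ => K * (t ^ s + t)) (𝓝[>] 0) (𝓝 0) := by
    have := (((continuous_rpow_const hs.le).add continuous_id).const_mul K).tendsto 0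
    simpa [zero_rpow hs.ne'] using this.mono_left nhdsWithin_le_nhds
  refine tendsto_of_tendsto_of_tendsto_of_le_of_le' tendsto_const_nhds hK ?_ ?_
  · filter_upwards [self_mem_nhdsWithin] with t (ht : 0 < t)
    exact div_nonneg (integral_nonneg pi_pos.le fun φ hφ =>
        mul_nonneg (sq_nonneg _) (weight_nonneg (fun φ hφ => (hΩ0 φ hφ).le) hφ))
      (mul_nonneg zero_le_two (integral_cos_sq_mul_weight_pos hΩ hΩ0 ht.ne').le)
  · filter_upwards [Ioc_mem_nhdsGT (by norm_num : (0 : ℝ) < 1 / 2)] with t ht using hbound t ht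

theorem tendsto_ratio_atTop (hs : 0 ≤ s) (hΩ : ContinuousOn Ω (Icc 0 π)) (hc : 0 < c)
    (hcΩ : ∀ φ ∈ Icc 0 π, c ≤ Ω φ) (hΩM : ∀ φ ∈ Icc 0 π, Ω φ ≤ M) :
    Tendsto (ratio s Ω) atTop atTop := by
  have hΩ0 : ∀ φ ∈ Icc 0 π, 0 < Ω φ := fun φ hφ => hc.trans_le (hcΩ φ hφ)
  have hM : 0 < M := (hΩ0 0 ⟨le_rfl, pi_pos.le⟩).trans_le (hΩM 0 ⟨le_rfl, pi_pos.le⟩)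
  have hbound : ∀ t ≥ 2, 2 ^ (-(2 + s) / 2) * c / (8 * π * M) * t ≤ ratio s Ω t := by
    intro t ht
    have ht0 : 0 < t := by linarith
    have hN := le_integral_sin_sq_mul_weight (s := s) (by linarith) hΩ hc.le hcΩ ht
    have hD := integral_cos_sq_mul_weight_le (t := t) hs hΩ (fun φ hφ => (hΩ0 φ hφ).le) hΩM
      (by linarith)
    calc 2 ^ (-(2 + s) / 2) * c / (8 * π * M) * t
        = 2 ^ (-(2 + s) / 2) * c / (4 * t) / (2 * (π * (M / t ^ 2))) := by
          field_simp; ring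
      _ ≤ ratio s Ω t :=
          div_le_div₀ ((by positivity : (0 : ℝ) ≤ _).trans hN) hN
            (mul_pos two_pos (integral_cos_sq_mul_weight_pos hΩ hΩ0 ht0.ne')) (by linarith)
  exact tendsto_atTop_mono' atTop ((eventually_ge_atTop 2).mono hbound)
    (tendsto_id.const_mul_atTop (by positivity))

end Ratio

end EllipsoidRatio

end

open EllipsoidRatio

theorem ratio_f_limits_and_root_general (s c : ℝ) (hs0 : 0 < s) (hc : 0 < c)
    (Ω : ℝ → ℝ) (hΩcont : ContinuousOn Ω (Set.Icc 0 π))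
    (hΩc : ∀ φ ∈ Set.Icc (0:ℝ) π, c ≤ Ω φ)
    (w : ℝ → ℝ → ℝ)
    (hw : ∀ t φ, w t φ =
      Real.sin φ * (Real.sin φ ^ 2 + t ^ 2 * Real.cos φ ^ 2) ^ (-(2 + s) / 2) * Ω φ)
    (f : ℝ → ℝ)
    (hf : ∀ t, f t = (∫ φ in (0:ℝ)..π, Real.sin φ ^ 2 * w t φ) /
      (2 * ∫ φ in (0:ℝ)..π, Real.cos φ ^ 2 * w t φ)) :
    Tendsto f (nhdsWithin 0 (Set.Ioi 0)) (nhds 0) ∧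
    Tendsto f atTop atTop ∧
    ∃ t : ℝ, 0 < t ∧ f t = 1 := by
  obtain rfl : w = weight s Ω := funext₂ hw
  obtain rfl : f = ratio s Ω := funext hf
  obtain ⟨M, hM⟩ := isCompact_Icc.bddAbove_image hΩcont
  have hΩM : ∀ φ ∈ Icc 0 π, Ω φ ≤ M := fun φ hφ => hM (mem_image_of_mem Ω hφ)
  have hzero := tendsto_ratio_nhdsGT_zero hs0 hΩcont hc hΩc hΩM
  have htop := tendsto_ratio_atTop hs0.le hΩcont hc hΩc hΩM
  have hcont : ContinuousOn (ratio s Ω) (Ioi 0) :=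
    (continuousOn_ratio hΩcont fun φ hφ => hc.trans_le (hΩc φ hφ)).mono fun t ht => ht.ne'
  obtain ⟨t, ht, h1⟩ := isPreconnected_Ioi.intermediate_value_Ioi (l₁ := 𝓝[>] 0) inf_le_right
    (le_principal_iff.2 (Ioi_mem_atTop 0)) hcont hzero htop (mem_Ioi.2 one_pos)
  exact ⟨hzero, htop, t, ht, h1⟩

theorem ratio_f_limits_and_root (s c : ℝ) (hs0 : 0 < s) (hs3 : s < 3) (hc : 0 < c)
    (Ω : ℝ → ℝ) (hΩcont : ContinuousOn Ω (Set.Icc 0 π))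
    (hΩc : ∀ φ ∈ Set.Icc (0:ℝ) π, c ≤ Ω φ)
    (w : ℝ → ℝ → ℝ)
    (hw : ∀ t φ, w t φ =
      Real.sin φ * (Real.sin φ ^ 2 + t ^ 2 * Real.cos φ ^ 2) ^ (-(2 + s) / 2) * Ω φ)
    (f : ℝ → ℝ)
    (hf : ∀ t, f t = (∫ φ in (0:ℝ)..π, Real.sin φ ^ 2 * w t φ) /
      (2 * ∫ φ in (0:ℝ)..π, Real.cos φ ^ 2 * w t φ)) :
    Tendsto f (nhdsWithin 0 (Set.Ioi 0)) (nhds 0) ∧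
    Tendsto f atTop atTop ∧
    ∃ t : ℝ, 0 < t ∧ f t = 1 :=
  ratio_f_limits_and_root_general s c hs0 hc Ω hΩcont hΩc w hw f hf
end

section
/- Let s > 0, t > 0, and let ω ≥ 0 be continuous on [0,π] and not almost-everywhere 0. Writing ∫ g for ∫₀^π g(φ) dμ_t(φ) where dμ_t(φ) = (sin²φ + t² cos²φ)^{-(2+s)/2 - 1} ω(φ) sin φ dφ, the Cauchy–Schwarz inequality gives (∫ sin²φ cos²φ)² ≤ (∫ sin⁴φ)(∫ cos⁴φ). Consequently, the function f(t) = (∫₀^π sin³φ (sin²φ + t²cos²φ)^{-(2+s)/2} ω(φ) dφ) / (2∫₀^π cos²φ sin φ (sin²φ + t²cos²φ)^{-(2+s)/2} ω(φ) dφ) satisfies f'(t) = -(2+s) t · [(∫ sin²φcos²φ)² - (∫ sin⁴φ)(∫ cos⁴φ)] / (2 [∫ cos²φ(sin²φ + t²cos²φ)]²) ≥ 0 for all t ∈ (0,∞). -/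
open Real Filter

private lemma aux_w_pos (x φ : ℝ) (hx : x ≠ 0) :
    0 < Real.sin φ ^ 2 + x ^ 2 * Real.cos φ ^ 2 := by
  rcases eq_or_ne (Real.cos φ) 0 with h | h
  · nlinarith [Real.sin_sq_add_cos_sq φ]
  · have h1 : 0 < x ^ 2 * Real.cos φ ^ 2 := by positivity
    nlinarith [sq_nonneg (Real.sin φ)]

private lemma aux_cont_w (q x : ℝ) (hx : x ≠ 0) :
    ContinuousOn (fun φ => (Real.sin φ ^ 2 + x ^ 2 * Real.cos φ ^ 2) ^ q) (Set.Icc 0 π) := by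
  apply ContinuousOn.rpow_const (by fun_prop)
  exact fun φ _ => Or.inl (aux_w_pos x φ hx).ne'

private lemma aux_cont (q x : ℝ) (hx : x ≠ 0) (G : ℝ → ℝ)
    (hG : ContinuousOn G (Set.Icc 0 π)) :
    ContinuousOn (fun φ => G φ * (Real.sin φ ^ 2 + x ^ 2 * Real.cos φ ^ 2) ^ q)
      (Set.Icc 0 π) :=
  hG.mul (aux_cont_w q x hx)

open MeasureTheory Metric intervalIntegral in
private lemma aux_hasDeriv (p : ℝ) (hp : p < 0) (G : ℝ → ℝ)
    (hG : ContinuousOn G (Set.Icc 0 π)) (t0 : ℝ) (ht0 : 0 < t0) :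
    HasDerivAt
      (fun x => ∫ φ in (0:ℝ)..π, G φ * (Real.sin φ ^ 2 + x ^ 2 * Real.cos φ ^ 2) ^ p)
      (∫ φ in (0:ℝ)..π, G φ * (p * (Real.sin φ ^ 2 + t0 ^ 2 * Real.cos φ ^ 2) ^ (p - 1)
        * (2 * t0 * Real.cos φ ^ 2))) t0 := by
  obtain ⟨M, hM⟩ := isCompact_Icc.exists_bound_of_continuousOn hG
  have hM0 : 0 ≤ M := le_trans (norm_nonneg _) (hM 0 ⟨le_refl _, Real.pi_pos.le⟩)
  set m : ℝ := min 1 ((t0 / 2) ^ 2) with hm_def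
  have hm : 0 < m := lt_min one_pos (by positivity)
  have hball : ∀ x ∈ ball t0 (t0 / 2), t0 / 2 < x ∧ x < 2 * t0 := by
    intro x hx
    rw [mem_ball, Real.dist_eq, abs_lt] at hx
    exact ⟨by linarith [hx.1], by linarith [hx.2]⟩
  have hxne : ∀ x ∈ ball t0 (t0 / 2), x ≠ 0 := fun x hx =>
    ne_of_gt (lt_trans (half_pos ht0) (hball x hx).1)
  have hwlb : ∀ x ∈ ball t0 (t0 / 2), ∀ φ : ℝ,
      m ≤ Real.sin φ ^ 2 + x ^ 2 * Real.cos φ ^ 2 := by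
    intro x hx φ
    obtain ⟨h1, _⟩ := hball x hx
    have h2 : (t0 / 2) ^ 2 ≤ x ^ 2 := by nlinarith
    have h3 := Real.sin_sq_add_cos_sq φ
    have hmin1 : m ≤ 1 := min_le_left _ _
    have hmin2 : m ≤ (t0 / 2) ^ 2 := min_le_right _ _
    nlinarith [sq_nonneg (Real.sin φ), sq_nonneg (Real.cos φ)]
  refine (intervalIntegral.hasDerivAt_integral_of_dominated_loc_of_deriv_le
    (F := fun x φ => G φ * (Real.sin φ ^ 2 + x ^ 2 * Real.cos φ ^ 2) ^ p)
    (F' := fun x φ => G φ * (p * (Real.sin φ ^ 2 + x ^ 2 * Real.cos φ ^ 2) ^ (p - 1)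
        * (2 * x * Real.cos φ ^ 2)))
    (bound := fun _ => M * (|p| * m ^ (p - 1) * (2 * (2 * t0))))
    (ball_mem_nhds t0 (half_pos ht0)) ?_ ?_ ?_ ?_ ?_ ?_).2
  · filter_upwards [ball_mem_nhds t0 (half_pos ht0)] with x hx
    rw [Set.uIoc_of_le Real.pi_pos.le]
    exact ((aux_cont p x (hxne x hx) G hG).mono Set.Ioc_subset_Icc_self).aestronglyMeasurable
      measurableSet_Ioc
  · apply ContinuousOn.intervalIntegrable
    rw [Set.uIcc_of_le Real.pi_pos.le]
    exact aux_cont p t0 (ne_of_gt ht0) G hG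
  · rw [Set.uIoc_of_le Real.pi_pos.le]
    refine (ContinuousOn.mono ?_ Set.Ioc_subset_Icc_self).aestronglyMeasurable measurableSet_Ioc
    exact hG.mul ((continuousOn_const.mul (aux_cont_w (p - 1) t0 (ne_of_gt ht0))).mul
      (by fun_prop))
  · filter_upwards [] with φ
    intro hφΙ x hx
    have hφ : φ ∈ Set.Icc (0:ℝ) π :=
      Set.Ioc_subset_Icc_self ((Set.uIoc_of_le Real.pi_pos.le) ▸ hφΙ)
    have hxne' := hxne x hx
    have hw := aux_w_pos x φ hxne'
    obtain ⟨hx1, hx2⟩ := hball x hx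
    have hx0 : 0 < x := lt_trans (half_pos ht0) hx1
    have hwle : (Real.sin φ ^ 2 + x ^ 2 * Real.cos φ ^ 2) ^ (p - 1) ≤ m ^ (p - 1) :=
      Real.rpow_le_rpow_of_nonpos hm (hwlb x hx φ) (by linarith)
    have hcos : Real.cos φ ^ 2 ≤ 1 := Real.cos_sq_le_one φ
    have h2x : 2 * x * Real.cos φ ^ 2 ≤ 2 * (2 * t0) := by nlinarith [sq_nonneg (Real.cos φ)]
    have h2x0 : 0 ≤ 2 * x * Real.cos φ ^ 2 := by positivity
    have hGle : |G φ| ≤ M := Real.norm_eq_abs (G φ) ▸ hM φ hφ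
    rw [Real.norm_eq_abs, abs_mul, abs_mul, abs_mul,
      abs_of_pos (Real.rpow_pos_of_pos hw _), abs_of_nonneg h2x0]
    have hww : 0 ≤ (Real.sin φ ^ 2 + x ^ 2 * Real.cos φ ^ 2) ^ (p - 1) :=
      (Real.rpow_pos_of_pos hw _).le
    gcongr
  · exact intervalIntegrable_const
  · filter_upwards [] with φ
    intro _ x hx
    have h1 : HasDerivAt (fun y : ℝ => Real.sin φ ^ 2 + y ^ 2 * Real.cos φ ^ 2)
        (2 * x * Real.cos φ ^ 2) x := by
      simpa using ((hasDerivAt_pow 2 x).mul_const (Real.cos φ ^ 2)).const_add (Real.sin φ ^ 2)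
    have h2 := h1.rpow_const (p := p) (Or.inl (aux_w_pos x φ (hxne x hx)).ne')
    have h3 := h2.const_mul (G φ)
    exact h3.congr_deriv (by ring)

open intervalIntegral in
private lemma aux_int_pos (h : ℝ → ℝ) (hcont : ContinuousOn h (Set.Icc 0 π))
    (hnn : ∀ φ ∈ Set.Icc (0:ℝ) π, 0 ≤ h φ)
    (a b : ℝ) (hab : a < b) (hsub : Set.Ioo a b ⊆ Set.Ioo 0 π)
    (hpos : ∀ φ ∈ Set.Ioo a b, φ ≠ π / 2 → 0 < h φ) :
    0 < ∫ φ in (0:ℝ)..π, h φ := by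
  obtain ⟨a', b', hab', hsub', hne⟩ :
      ∃ a' b', a' < b' ∧ Set.Ioo a' b' ⊆ Set.Ioo a b ∧ ∀ φ ∈ Set.Ioo a' b', φ ≠ π / 2 := by
    rcases lt_or_ge a (π / 2) with hc | hc
    · exact ⟨a, min b (π / 2), lt_min hab hc,
        fun φ hφ => ⟨hφ.1, lt_of_lt_of_le hφ.2 (min_le_left _ _)⟩,
        fun φ hφ => ne_of_lt (lt_of_lt_of_le hφ.2 (min_le_right _ _))⟩
    · exact ⟨a, b, hab, subset_rfl, fun φ hφ => ne_of_gt (lt_of_le_of_lt hc hφ.1)⟩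
  have hss : Set.Ioo a' b' ⊆ Set.Ioo 0 π := fun φ hφ => hsub (hsub' hφ)
  obtain ⟨h0, hπ'⟩ := (Set.Ioo_subset_Ioo_iff hab').mp hss
  have haπ : a' ≤ π := le_trans hab'.le hπ'
  have h0b : (0:ℝ) ≤ b' := le_trans h0 hab'.le
  have hint : ∀ u v : ℝ, 0 ≤ u → u ≤ v → v ≤ π → IntervalIntegrable h MeasureTheory.volume u v := by
    intro u v hu huv hv
    apply ContinuousOn.intervalIntegrable
    rw [Set.uIcc_of_le huv]
    exact hcont.mono (Set.Icc_subset_Icc hu hv)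
  have i1 := hint 0 a' le_rfl h0 haπ
  have i2 := hint a' b' h0 hab'.le hπ'
  have i3 := hint b' π h0b hπ' le_rfl
  have i4 := hint 0 b' le_rfl h0b hπ'
  have e1 := intervalIntegral.integral_add_adjacent_intervals i1 i2
  have e2 := intervalIntegral.integral_add_adjacent_intervals i4 i3
  have n1 : 0 ≤ ∫ φ in (0:ℝ)..a', h φ :=
    intervalIntegral.integral_nonneg h0 (fun u hu => hnn u ⟨hu.1, le_trans hu.2 haπ⟩)
  have n3 : 0 ≤ ∫ φ in b'..π, h φ :=
    intervalIntegral.integral_nonneg hπ' (fun u hu => hnn u ⟨le_trans h0b hu.1, hu.2⟩)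
  have pos2 : 0 < ∫ φ in a'..b', h φ :=
    intervalIntegral.intervalIntegral_pos_of_pos_on i2
      (fun x hx => hpos x (hsub' hx) (hne x hx)) hab'
  linarith

theorem ratio_f_monotone (s : ℝ) (hs : 0 < s)
    (ω : ℝ → ℝ) (hωcont : ContinuousOn ω (Set.Icc 0 π))
    (hωnonneg : ∀ φ ∈ Set.Icc (0:ℝ) π, 0 ≤ ω φ)
    (hωne : ∃ φ ∈ Set.Icc (0:ℝ) π, ω φ ≠ 0)
    (I : (ℝ → ℝ) → ℝ → ℝ)
    (hI : ∀ g t, I g t = ∫ φ in (0:ℝ)..π,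
      g φ * ((Real.sin φ ^ 2 + t ^ 2 * Real.cos φ ^ 2) ^ (-(2 + s) / 2 - 1)
        * ω φ * Real.sin φ))
    (f : ℝ → ℝ)
    (hf : ∀ t, f t =
      (∫ φ in (0:ℝ)..π, Real.sin φ ^ 3 *
          (Real.sin φ ^ 2 + t ^ 2 * Real.cos φ ^ 2) ^ (-(2 + s) / 2) * ω φ) /
      (2 * ∫ φ in (0:ℝ)..π, Real.cos φ ^ 2 * Real.sin φ *
          (Real.sin φ ^ 2 + t ^ 2 * Real.cos φ ^ 2) ^ (-(2 + s) / 2) * ω φ)) :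
    ∀ t : ℝ, 0 < t →
      deriv f t = -(2 + s) * t *
          ((I (fun φ => Real.sin φ ^ 2 * Real.cos φ ^ 2) t) ^ 2 -
            (I (fun φ => Real.sin φ ^ 4) t) * (I (fun φ => Real.cos φ ^ 4) t)) /
          (2 * (I (fun φ => Real.cos φ ^ 2 *
            (Real.sin φ ^ 2 + t ^ 2 * Real.cos φ ^ 2)) t) ^ 2) ∧
      0 ≤ deriv f t := by
  intro t ht
  have hπ := Real.pi_pos
  have htne : t ≠ 0 := ne_of_gt ht
  set p : ℝ := -(2 + s) / 2 with hp_def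
  have hp : p < 0 := by rw [hp_def]; linarith
  have hwpos : ∀ φ : ℝ, 0 < Real.sin φ ^ 2 + t ^ 2 * Real.cos φ ^ 2 :=
    fun φ => aux_w_pos t φ htne
  have hc1 : ContinuousOn (fun φ => Real.sin φ ^ 2 * Real.cos φ ^ 2) (Set.Icc 0 π) := by
    fun_prop
  have hc2 : ContinuousOn (fun φ => Real.sin φ ^ 4) (Set.Icc 0 π) := by fun_prop
  have hc3 : ContinuousOn (fun φ => Real.cos φ ^ 4) (Set.Icc 0 π) := by fun_prop
  have hIntK : ∀ g : ℝ → ℝ, ContinuousOn g (Set.Icc 0 π) →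
      IntervalIntegrable (fun φ => g φ *
        ((Real.sin φ ^ 2 + t ^ 2 * Real.cos φ ^ 2) ^ (p - 1) * ω φ * Real.sin φ))
        MeasureTheory.volume 0 π := by
    intro g hg
    apply ContinuousOn.intervalIntegrable
    rw [Set.uIcc_of_le hπ.le]
    exact hg.mul (((aux_cont_w (p - 1) t htne).mul hωcont).mul
      Real.continuous_sin.continuousOn)
  have hlin : ∀ (c1 c2 : ℝ) (g1 g2 : ℝ → ℝ), ContinuousOn g1 (Set.Icc 0 π) →
      ContinuousOn g2 (Set.Icc 0 π) →
      c1 * I g1 t + c2 * I g2 t = ∫ φ in (0:ℝ)..π, (c1 * g1 φ + c2 * g2 φ) *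
        ((Real.sin φ ^ 2 + t ^ 2 * Real.cos φ ^ 2) ^ (p - 1) * ω φ * Real.sin φ) := by
    intro c1 c2 g1 g2 hg1 hg2
    rw [hI, hI, ← intervalIntegral.integral_const_mul, ← intervalIntegral.integral_const_mul,
      ← intervalIntegral.integral_add ((hIntK g1 hg1).const_mul c1)
        ((hIntK g2 hg2).const_mul c2)]
    exact intervalIntegral.integral_congr fun φ _ => by ring
  -- Cauchy–Schwarz
  have hCS : (I (fun φ => Real.sin φ ^ 2 * Real.cos φ ^ 2) t) ^ 2 ≤
      (I (fun φ => Real.sin φ ^ 4) t) * (I (fun φ => Real.cos φ ^ 4) t) := by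
    have hq : ∀ x : ℝ,
        0 ≤ (I (fun φ => Real.cos φ ^ 4) t) * (x * x) +
          (-(2 * I (fun φ => Real.sin φ ^ 2 * Real.cos φ ^ 2) t)) * x +
          I (fun φ => Real.sin φ ^ 4) t := by
      intro x
      have hg12c : ContinuousOn
          (fun φ => -(2 * x) * (Real.sin φ ^ 2 * Real.cos φ ^ 2) + 1 * Real.sin φ ^ 4)
          (Set.Icc 0 π) := by fun_prop
      have e1 := hlin (-(2 * x)) 1 _ _ hc1 hc2
      have e1' : -(2 * x) * I (fun φ => Real.sin φ ^ 2 * Real.cos φ ^ 2) t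
          + 1 * I (fun φ => Real.sin φ ^ 4) t
          = I (fun φ => -(2 * x) * (Real.sin φ ^ 2 * Real.cos φ ^ 2)
              + 1 * Real.sin φ ^ 4) t := by
        rw [hI (fun φ => -(2 * x) * (Real.sin φ ^ 2 * Real.cos φ ^ 2)
          + 1 * Real.sin φ ^ 4)]
        exact e1
      have e2 := hlin (x * x) 1 _ _ hc3 hg12c
      have e3 : (I (fun φ => Real.cos φ ^ 4) t) * (x * x) +
          (-(2 * I (fun φ => Real.sin φ ^ 2 * Real.cos φ ^ 2) t)) * x +
          I (fun φ => Real.sin φ ^ 4) t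
          = ∫ φ in (0:ℝ)..π,
            ((x * Real.cos φ ^ 2 - Real.sin φ ^ 2) ^ 2) *
            ((Real.sin φ ^ 2 + t ^ 2 * Real.cos φ ^ 2) ^ (p - 1) * ω φ * Real.sin φ) := by
        rw [show (I (fun φ => Real.cos φ ^ 4) t) * (x * x) +
            (-(2 * I (fun φ => Real.sin φ ^ 2 * Real.cos φ ^ 2) t)) * x +
            I (fun φ => Real.sin φ ^ 4) t
          = (x * x) * I (fun φ => Real.cos φ ^ 4) t +
            1 * (-(2 * x) * I (fun φ => Real.sin φ ^ 2 * Real.cos φ ^ 2) t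
              + 1 * I (fun φ => Real.sin φ ^ 4) t) by ring, e1', e2]
        exact intervalIntegral.integral_congr fun φ _ => by beta_reduce; ring
      rw [e3]
      apply intervalIntegral.integral_nonneg hπ.le
      intro u hu
      have h1 : (0:ℝ) ≤ (Real.sin u ^ 2 + t ^ 2 * Real.cos u ^ 2) ^ (p - 1) :=
        (Real.rpow_pos_of_pos (hwpos u) _).le
      have h2 := hωnonneg u hu
      have h3 := Real.sin_nonneg_of_nonneg_of_le_pi hu.1 hu.2
      exact mul_nonneg (sq_nonneg _) (mul_nonneg (mul_nonneg h1 h2) h3)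
    have hd := discrim_le_zero hq
    rw [discrim] at hd
    nlinarith [hd]
  -- positivity of the denominator integral
  have hDpos : 0 < ∫ φ in (0:ℝ)..π, Real.cos φ ^ 2 * Real.sin φ *
      (Real.sin φ ^ 2 + t ^ 2 * Real.cos φ ^ 2) ^ p * ω φ := by
    obtain ⟨φ0, hφ0, hωφ0⟩ := hωne
    have hω0 : 0 < ω φ0 := lt_of_le_of_ne (hωnonneg φ0 hφ0) (Ne.symm hωφ0)
    have htend : Filter.Tendsto ω (nhdsWithin φ0 (Set.Icc 0 π)) (nhds (ω φ0)) :=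
      hωcont φ0 hφ0
    have hev : ∀ᶠ ψ in nhdsWithin φ0 (Set.Icc 0 π), 0 < ω ψ :=
      htend.eventually (eventually_gt_nhds hω0)
    obtain ⟨δ, hδ, hδsub⟩ := Metric.mem_nhdsWithin_iff.mp hev
    refine aux_int_pos _ ?_ ?_ (max (φ0 - δ / 2) 0) (min (φ0 + δ / 2) π) ?_ ?_ ?_
    · exact ((by fun_prop : ContinuousOn (fun φ => Real.cos φ ^ 2 * Real.sin φ)
        (Set.Icc 0 π)).mul (aux_cont_w p t htne)).mul hωcont
    · intro u hu
      exact mul_nonneg (mul_nonneg (mul_nonneg (sq_nonneg _)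
        (Real.sin_nonneg_of_nonneg_of_le_pi hu.1 hu.2))
        (Real.rpow_pos_of_pos (hwpos u) p).le) (hωnonneg u hu)
    · exact max_lt (lt_min (by linarith) (by linarith [hφ0.2]))
        (lt_min (by linarith [hφ0.1]) hπ)
    · exact fun ψ hψ => ⟨lt_of_le_of_lt (le_max_right _ _) hψ.1,
        lt_of_lt_of_le hψ.2 (min_le_right _ _)⟩
    · intro ψ hψ hψne
      have h0ψ : 0 < ψ := lt_of_le_of_lt (le_max_right _ _) hψ.1
      have hψπ : ψ < π := lt_of_lt_of_le hψ.2 (min_le_right _ _)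
      have h1 : φ0 - δ / 2 < ψ := lt_of_le_of_lt (le_max_left _ _) hψ.1
      have h2 : ψ < φ0 + δ / 2 := lt_of_lt_of_le hψ.2 (min_le_left _ _)
      have hωψ : 0 < ω ψ := hδsub ⟨Metric.mem_ball.mpr
        (by rw [Real.dist_eq, abs_lt]; constructor <;> linarith), h0ψ.le, hψπ.le⟩
      have hsin : 0 < Real.sin ψ := Real.sin_pos_of_pos_of_lt_pi h0ψ hψπ
      have hcosne : Real.cos ψ ≠ 0 := by
        intro hcc
        exact hψne (Real.injOn_cos ⟨h0ψ.le, hψπ.le⟩ ⟨by positivity, by linarith⟩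
          (by rw [hcc, Real.cos_pi_div_two]))
      have hc2' : 0 < Real.cos ψ ^ 2 :=
        lt_of_le_of_ne (sq_nonneg _) (Ne.symm (pow_ne_zero 2 hcosne))
      exact mul_pos (mul_pos (mul_pos hc2' hsin)
        (Real.rpow_pos_of_pos (hwpos ψ) _)) hωψ
  -- derivatives of numerator and denominator
  have hNder := aux_hasDeriv p hp (fun φ => Real.sin φ ^ 3 * ω φ)
    ((by fun_prop : ContinuousOn (fun φ => Real.sin φ ^ 3) (Set.Icc 0 π)).mul hωcont) t ht
  have hNr : (fun x => ∫ φ in (0:ℝ)..π, (Real.sin φ ^ 3 * ω φ) *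
        (Real.sin φ ^ 2 + x ^ 2 * Real.cos φ ^ 2) ^ p)
      = fun x => ∫ φ in (0:ℝ)..π, Real.sin φ ^ 3 *
        (Real.sin φ ^ 2 + x ^ 2 * Real.cos φ ^ 2) ^ p * ω φ :=
    funext fun x => intervalIntegral.integral_congr fun φ _ => by ring
  rw [hNr] at hNder
  have hNval : (∫ φ in (0:ℝ)..π, (Real.sin φ ^ 3 * ω φ) *
      (p * (Real.sin φ ^ 2 + t ^ 2 * Real.cos φ ^ 2) ^ (p - 1) * (2 * t * Real.cos φ ^ 2)))
      = (2 * p * t) * I (fun φ => Real.sin φ ^ 2 * Real.cos φ ^ 2) t := by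
    rw [hI, ← intervalIntegral.integral_const_mul]
    exact intervalIntegral.integral_congr fun φ _ => by beta_reduce; ring
  rw [hNval] at hNder
  have hDder := aux_hasDeriv p hp (fun φ => Real.cos φ ^ 2 * Real.sin φ * ω φ)
    ((by fun_prop : ContinuousOn (fun φ => Real.cos φ ^ 2 * Real.sin φ)
      (Set.Icc 0 π)).mul hωcont) t ht
  have hDr : (fun x => ∫ φ in (0:ℝ)..π, (Real.cos φ ^ 2 * Real.sin φ * ω φ) *
        (Real.sin φ ^ 2 + x ^ 2 * Real.cos φ ^ 2) ^ p)
      = fun x => ∫ φ in (0:ℝ)..π, Real.cos φ ^ 2 * Real.sin φ *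
        (Real.sin φ ^ 2 + x ^ 2 * Real.cos φ ^ 2) ^ p * ω φ :=
    funext fun x => intervalIntegral.integral_congr fun φ _ => by ring
  rw [hDr] at hDder
  have hDval : (∫ φ in (0:ℝ)..π, (Real.cos φ ^ 2 * Real.sin φ * ω φ) *
      (p * (Real.sin φ ^ 2 + t ^ 2 * Real.cos φ ^ 2) ^ (p - 1) * (2 * t * Real.cos φ ^ 2)))
      = (2 * p * t) * I (fun φ => Real.cos φ ^ 4) t := by
    rw [hI, ← intervalIntegral.integral_const_mul]
    exact intervalIntegral.integral_congr fun φ _ => by beta_reduce; ring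
  rw [hDval] at hDder
  -- rpow splitting
  have hww : ∀ φ : ℝ, (Real.sin φ ^ 2 + t ^ 2 * Real.cos φ ^ 2) ^ p
      = (Real.sin φ ^ 2 + t ^ 2 * Real.cos φ ^ 2) ^ (p - 1) *
        (Real.sin φ ^ 2 + t ^ 2 * Real.cos φ ^ 2) := by
    intro φ
    rw [← Real.rpow_add_one (hwpos φ).ne' (p - 1), sub_add_cancel]
  -- value identities
  have hNt : (∫ φ in (0:ℝ)..π, Real.sin φ ^ 3 *
      (Real.sin φ ^ 2 + t ^ 2 * Real.cos φ ^ 2) ^ p * ω φ)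
      = 1 * I (fun φ => Real.sin φ ^ 4) t
        + t ^ 2 * I (fun φ => Real.sin φ ^ 2 * Real.cos φ ^ 2) t := by
    rw [hlin 1 (t ^ 2) _ _ hc2 hc1]
    exact intervalIntegral.integral_congr fun φ _ => by beta_reduce; rw [hww φ]; ring
  have hDt : I (fun φ => Real.cos φ ^ 2 * (Real.sin φ ^ 2 + t ^ 2 * Real.cos φ ^ 2)) t
      = 1 * I (fun φ => Real.sin φ ^ 2 * Real.cos φ ^ 2) t
        + t ^ 2 * I (fun φ => Real.cos φ ^ 4) t := by
    rw [hlin 1 (t ^ 2) _ _ hc1 hc3, hI]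
    exact intervalIntegral.integral_congr fun φ _ => by beta_reduce; ring
  have hDeq : I (fun φ => Real.cos φ ^ 2 * (Real.sin φ ^ 2 + t ^ 2 * Real.cos φ ^ 2)) t
      = ∫ φ in (0:ℝ)..π, Real.cos φ ^ 2 * Real.sin φ *
        (Real.sin φ ^ 2 + t ^ 2 * Real.cos φ ^ 2) ^ p * ω φ := by
    rw [hI]
    exact intervalIntegral.integral_congr fun φ _ => by beta_reduce; rw [hww φ]; ring
  -- derivative of f
  have hfeq : f = fun x => (∫ φ in (0:ℝ)..π, Real.sin φ ^ 3 *
      (Real.sin φ ^ 2 + x ^ 2 * Real.cos φ ^ 2) ^ p * ω φ) /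
      (2 * ∫ φ in (0:ℝ)..π, Real.cos φ ^ 2 * Real.sin φ *
      (Real.sin φ ^ 2 + x ^ 2 * Real.cos φ ^ 2) ^ p * ω φ) := funext hf
  have hDne : (2 * ∫ φ in (0:ℝ)..π, Real.cos φ ^ 2 * Real.sin φ *
      (Real.sin φ ^ 2 + t ^ 2 * Real.cos φ ^ 2) ^ p * ω φ) ≠ 0 :=
    ne_of_gt (by linarith)
  have hderf : HasDerivAt f
      (((2 * p * t) * I (fun φ => Real.sin φ ^ 2 * Real.cos φ ^ 2) t *
          (2 * ∫ φ in (0:ℝ)..π, Real.cos φ ^ 2 * Real.sin φ *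
            (Real.sin φ ^ 2 + t ^ 2 * Real.cos φ ^ 2) ^ p * ω φ)
        - (∫ φ in (0:ℝ)..π, Real.sin φ ^ 3 *
            (Real.sin φ ^ 2 + t ^ 2 * Real.cos φ ^ 2) ^ p * ω φ) *
          (2 * ((2 * p * t) * I (fun φ => Real.cos φ ^ 4) t))) /
        (2 * ∫ φ in (0:ℝ)..π, Real.cos φ ^ 2 * Real.sin φ *
          (Real.sin φ ^ 2 + t ^ 2 * Real.cos φ ^ 2) ^ p * ω φ) ^ 2) t := by
    rw [hfeq]
    exact hNder.div (hDder.const_mul 2) hDne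
  have hposX : 0 < 1 * I (fun φ => Real.sin φ ^ 2 * Real.cos φ ^ 2) t
      + t ^ 2 * I (fun φ => Real.cos φ ^ 4) t := by
    rw [← hDt, hDeq]; exact hDpos
  have hEq : deriv f t = -(2 + s) * t *
      ((I (fun φ => Real.sin φ ^ 2 * Real.cos φ ^ 2) t) ^ 2 -
        (I (fun φ => Real.sin φ ^ 4) t) * (I (fun φ => Real.cos φ ^ 4) t)) /
      (2 * (I (fun φ => Real.cos φ ^ 2 *
        (Real.sin φ ^ 2 + t ^ 2 * Real.cos φ ^ 2)) t) ^ 2) := by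
    rw [hderf.deriv, hNt, ← hDeq, hDt,
      div_eq_div_iff (ne_of_gt (pow_pos (by linarith : (0:ℝ) <
        2 * (1 * I (fun φ => Real.sin φ ^ 2 * Real.cos φ ^ 2) t
          + t ^ 2 * I (fun φ => Real.cos φ ^ 4) t)) 2))
        (ne_of_gt (mul_pos two_pos (pow_pos hposX 2))), hp_def]
    ring
  refine ⟨hEq, ?_⟩
  rw [hEq]
  apply div_nonneg
  · have h1 : 0 ≤ (2 + s) * t := mul_nonneg (by linarith) ht.le
    nlinarith [mul_nonneg h1 (sub_nonneg.mpr hCS)]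
  · positivity
end

section
/- Let (a_n)_{n∈ℤ} be nonnegative reals with ∑_n a_n = 1. Then for any α ≥ 1, α ∑_n a_n² + ∑_n n² a_n ≥ c α^{2/3} - 1 for some absolute constant c > 0. -/
/-!
Put `β = α^{1/3}`, so `α = β³`. Inside the window `|n| ≤ β`, AM-GM gives
`β² a ≤ β³ a² + β/4`; outside it, `β² a ≤ n² a`. Summing over `n`, the window contributes at most
`(2β + 1) β/4 ≤ 3β²/4`, so `β² ≤ α ∑ aₙ² + ∑ n² aₙ + 3β²/4`, i.e. the bound holds with `c = 1/4`.
All sums are taken in `ℝ≥0∞`, where no summability has to be checked.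
-/

open Real ENNReal

noncomputable def intWindow (β : ℝ) : Finset ℤ := Finset.Icc (-(⌊β⌋₊ : ℤ)) ⌊β⌋₊

lemma lt_abs_of_notMem_intWindow {β : ℝ} {n : ℤ} (hn : n ∉ intWindow β) : β < |(n : ℝ)| := by
  have hN : (⌊β⌋₊ : ℤ) + 1 ≤ |n| := by
    rw [intWindow, Finset.mem_Icc, ← abs_le] at hn
    omega
  calc β < ⌊β⌋₊ + 1 := Nat.lt_floor_add_one β
    _ ≤ |(n : ℝ)| := by exact_mod_cast hN

lemma card_intWindow_le {β : ℝ} (hβ : 0 ≤ β) : ((intWindow β).card : ℝ) ≤ 2 * β + 1 := by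
  have hcard : (intWindow β).card = 2 * ⌊β⌋₊ + 1 := by
    rw [intWindow, Int.card_Icc]
    omega
  rw [hcard]
  push_cast
  linarith [Nat.floor_le hβ]

lemma sq_mul_le_cube_mul_sq_add {β : ℝ} (hβ : 0 ≤ β) (a : ℝ) :
    β ^ 2 * a ≤ β ^ 3 * a ^ 2 + β / 4 := by
  nlinarith [mul_nonneg hβ (sq_nonneg (β * a - 1 / 2))]

lemma ofReal_sq_mul_le_add_indicator_intWindow {β a : ℝ} (hβ : 0 ≤ β) (ha : 0 ≤ a) (n : ℤ) :
    ENNReal.ofReal (β ^ 2) * ENNReal.ofReal a ≤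
      ENNReal.ofReal (β ^ 3) * ENNReal.ofReal (a ^ 2) + ENNReal.ofReal ((n : ℝ) ^ 2 * a) +
        (intWindow β : Set ℤ).indicator (fun _ => ENNReal.ofReal (β / 4)) n := by
  rw [← ENNReal.ofReal_mul (by positivity), ← ENNReal.ofReal_mul (by positivity),
    ← ENNReal.ofReal_add (by positivity) (by positivity)]
  have hconf : 0 ≤ (n : ℝ) ^ 2 * a := by positivity
  by_cases hn : n ∈ intWindow β
  · rw [Set.indicator_of_mem (Finset.mem_coe.2 hn),
      ← ENNReal.ofReal_add (by positivity) (by positivity)]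
    exact ENNReal.ofReal_le_ofReal (by linarith [sq_mul_le_cube_mul_sq_add hβ a])
  · rw [Set.indicator_of_notMem (Finset.mem_coe.not.2 hn), add_zero]
    have hsq : β ^ 2 ≤ (n : ℝ) ^ 2 := by
      rw [← sq_abs (n : ℝ)]
      exact pow_le_pow_left₀ hβ (lt_abs_of_notMem_intWindow hn).le 2
    have hrep : 0 ≤ β ^ 3 * a ^ 2 := by positivity
    exact ENNReal.ofReal_le_ofReal (by nlinarith [mul_le_mul_of_nonneg_right hsq ha])

lemma ofReal_sq_mul_tsum_le {β : ℝ} (hβ : 0 ≤ β) (a : ℤ → ℝ) (ha : ∀ n, 0 ≤ a n) :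
    ENNReal.ofReal (β ^ 2) * ∑' n, ENNReal.ofReal (a n) ≤
      ENNReal.ofReal (β ^ 3) * ∑' n, ENNReal.ofReal (a n ^ 2) +
        ∑' n : ℤ, ENNReal.ofReal ((n : ℝ) ^ 2 * a n) + ENNReal.ofReal ((2 * β + 1) * (β / 4)) := by
  have hwindow : ∑' n, (intWindow β : Set ℤ).indicator (fun _ => ENNReal.ofReal (β / 4)) n ≤
      ENNReal.ofReal ((2 * β + 1) * (β / 4)) := by
    rw [← tsum_subtype, Finset.tsum_subtype' _ fun _ => ENNReal.ofReal (β / 4), Finset.sum_const,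
      nsmul_eq_mul, ENNReal.ofReal_mul (by positivity), ← ENNReal.ofReal_natCast]
    gcongr
    exact card_intWindow_le hβ
  calc ENNReal.ofReal (β ^ 2) * ∑' n, ENNReal.ofReal (a n)
      ≤ ∑' n, (ENNReal.ofReal (β ^ 3) * ENNReal.ofReal (a n ^ 2) +
          ENNReal.ofReal ((n : ℝ) ^ 2 * a n) +
            (intWindow β : Set ℤ).indicator (fun _ => ENNReal.ofReal (β / 4)) n) := by
        rw [← ENNReal.tsum_mul_left]
        exact ENNReal.tsum_le_tsum fun n => ofReal_sq_mul_le_add_indicator_intWindow hβ (ha n) n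
    _ ≤ _ := by
        rw [ENNReal.tsum_add, ENNReal.tsum_add, ENNReal.tsum_mul_left]
        gcongr

lemma ofReal_sq_div_four_le {β : ℝ} (hβ : 1 ≤ β) (a : ℤ → ℝ) (ha : ∀ n, 0 ≤ a n)
    (hmass : ∑' n, ENNReal.ofReal (a n) = 1) :
    ENNReal.ofReal (β ^ 2 / 4) ≤
      ENNReal.ofReal (β ^ 3) * ∑' n, ENNReal.ofReal (a n ^ 2) +
        ∑' n : ℤ, ENNReal.ofReal ((n : ℝ) ^ 2 * a n) := by
  have hbound := ofReal_sq_mul_tsum_le (by linarith) a ha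
  rw [hmass, mul_one] at hbound
  have hwindow : ENNReal.ofReal ((2 * β + 1) * (β / 4)) ≤ ENNReal.ofReal (3 * β ^ 2 / 4) :=
    ENNReal.ofReal_le_ofReal (by nlinarith)
  have hsplit : ENNReal.ofReal (β ^ 2) =
      ENNReal.ofReal (β ^ 2 / 4) + ENNReal.ofReal (3 * β ^ 2 / 4) := by
    rw [← ENNReal.ofReal_add (by positivity) (by positivity)]
    ring_nf
  refine ENNReal.le_of_add_le_add_right (a := ENNReal.ofReal (3 * β ^ 2 / 4))
    ENNReal.ofReal_ne_top ?_
  rw [← hsplit]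
  exact hbound.trans (add_le_add_right hwindow _)

theorem discrete_lower_bound :
    ∃ c : ℝ, 0 < c ∧
      ∀ (a : ℤ → ℝ), (∀ n, 0 ≤ a n) → (∑' n, ENNReal.ofReal (a n)) = 1 →
        ∀ α : ℝ, 1 ≤ α →
          ENNReal.ofReal (c * α ^ ((2:ℝ)/3) - 1) ≤
            ENNReal.ofReal α * (∑' n, ENNReal.ofReal ((a n) ^ 2)) +
              ∑' n : ℤ, ENNReal.ofReal ((n : ℝ) ^ 2 * a n) := by
  refine ⟨1 / 4, by norm_num, fun a ha hmass α hα => ?_⟩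
  set β := α ^ ((1 : ℝ) / 3)
  have hβ_cube : β ^ 3 = α := by
    rw [← Real.rpow_natCast, ← Real.rpow_mul (by linarith)]
    norm_num
  have hβ_sq : α ^ ((2 : ℝ) / 3) = β ^ 2 := by
    rw [← Real.rpow_natCast, ← Real.rpow_mul (by linarith)]
    norm_num
  calc ENNReal.ofReal (1 / 4 * α ^ ((2 : ℝ) / 3) - 1) ≤ ENNReal.ofReal (β ^ 2 / 4) :=
        ENNReal.ofReal_le_ofReal (by linarith)
    _ ≤ _ := hβ_cube ▸ ofReal_sq_div_four_le (Real.one_le_rpow hα (by norm_num)) a ha hmass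
end

section
/- Let g₁, g₂ : [−1,1] → [0,∞) be even functions with g_i increasing on [0,1]. Then the function φ ↦ ∫_{S²} g₁(ȳ · (sin φ, 0, cos φ)) g₂(ȳ · (0,0,1)) dȳ is nonincreasing on [0, π/2]. -/
/-!
Write `gᵢ t = Gᵢ (t ^ 2)` with `Gᵢ` monotone. For `0 ≤ φ ≤ φ' ≤ π / 2` let `σ` be the reflection
of ℝ³ swapping the unit vectors `u φ` and `u φ'` of the xz-plane; it sends the pole `u 0` to
`u (φ + φ')` and preserves the surface measure of the sphere. Averaging the integrand over `y`
and `σ y` reduces the claim to the pointwise rearrangement inequality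
`0 ≤ (G₁ a - G₁ a') * (G₂ b - G₂ b')`, where `a, a', b, b'` are the squares of `⟪y, u φ⟫`,
`⟪y, u φ'⟫`, `⟪y, u 0⟫`, `⟪y, u (φ + φ')⟫`. Since
`⟪y, u α⟫ ^ 2 - ⟪y, u β⟫ ^ 2 = sin (α - β) * W (α + β)`, both `a - a'` and `b - b'` are
nonpositive multiples of `W (φ + φ')`, so they have the same sign.
-/

open Real MeasureTheory
open scoped RealInnerProductSpace

local notation "ℝ³" => EuclideanSpace ℝ (Fin 3)

theorem sub_mul_sub_nonneg_of_monotone {f g : ℝ → ℝ} (hf : Monotone f) (hg : Monotone g)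
    {a a' b b' : ℝ} (h : 0 ≤ (a - a') * (b - b')) : 0 ≤ (f a - f a') * (g b - g b') := by
  rcases mul_nonneg_iff.1 h with ⟨ha, hb⟩ | ⟨ha, hb⟩
  · exact mul_nonneg (sub_nonneg.2 (hf (sub_nonneg.1 ha))) (sub_nonneg.2 (hg (sub_nonneg.1 hb)))
  · exact mul_nonneg_of_nonpos_of_nonpos (sub_nonpos.2 (hf (sub_nonpos.1 ha)))
      (sub_nonpos.2 (hg (sub_nonpos.1 hb)))

theorem integral_le_integral_of_add_comp_le {α : Type*} [MeasurableSpace α] {μ : Measure α}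
    {σ : α → α} (hσ : MeasurePreserving σ μ μ) {f g : α → ℝ} (hf : Integrable f μ)
    (hg : Integrable g μ) (h : ∀ x, f x + f (σ x) ≤ g x + g (σ x)) :
    ∫ x, f x ∂μ ≤ ∫ x, g x ∂μ := by
  have hsym : ∀ k : α → ℝ, Integrable k μ → ∫ x, k x + k (σ x) ∂μ = 2 * ∫ x, k x ∂μ := by
    intro k hk
    have hkσ : Integrable (fun x => k (σ x)) μ := hσ.integrable_comp_of_integrable hk
    rw [integral_add hk hkσ, two_mul]
    congr 1
    have hkmap : AEStronglyMeasurable k (μ.map σ) := by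
      rw [hσ.map_eq]; exact hk.aestronglyMeasurable
    rw [← integral_map hσ.measurable.aemeasurable hkmap, hσ.map_eq]
  have hmono : ∫ x, f x + f (σ x) ∂μ ≤ ∫ x, g x + g (σ x) ∂μ :=
    integral_mono (hf.add (hσ.integrable_comp_of_integrable hf))
      (hg.add (hσ.integrable_comp_of_integrable hg)) h
  rw [hsym f hf, hsym g hg] at hmono
  linarith

theorem LinearIsometryEquiv.measurePreserving_hausdorffMeasure_restrict_sphere
    {E : Type*} [NormedAddCommGroup E] [NormedSpace ℝ E] [MeasurableSpace E] [BorelSpace E]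
    (e : E ≃ₗᵢ[ℝ] E) (d r : ℝ) :
    MeasurePreserving e (μH[d].restrict (Metric.sphere 0 r))
      (μH[d].restrict (Metric.sphere 0 r)) := by
  simpa [e.preimage_sphere] using
    (e.toIsometryEquiv.measurePreserving_hausdorffMeasure d).restrict_preimage
      (s := Metric.sphere 0 r) Metric.isClosed_sphere.measurableSet

theorem hausdorffMeasure_image_lt_top_of_contDiff {ι F : Type*} [Fintype ι]
    [NormedAddCommGroup F] [NormedSpace ℝ F] [MeasurableSpace F] [BorelSpace F]
    {f : (ι → ℝ) → F} (hf : ContDiff ℝ 1 f) {K : Set (ι → ℝ)} (hK : IsCompact K) :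
    μH[Fintype.card ι] (f '' K) < ⊤ := by
  obtain ⟨C, hC⟩ := hf.locallyLipschitz.locallyLipschitzOn.exists_lipschitzOnWith_of_compact hK
  refine (hC.hausdorffMeasure_image_le (Nat.cast_nonneg _)).trans_lt
    (ENNReal.mul_lt_top (by simp) ?_)
  rw [hausdorffMeasure_pi_real]
  exact hK.measure_lt_top

noncomputable def evenProfile (g : ℝ → ℝ) (s : ℝ) : ℝ :=
  g (Set.projIcc 0 1 zero_le_one √s)

section evenProfile

variable {g : ℝ → ℝ}

theorem evenProfile_sq (hg : ∀ t, g (-t) = g t) {t : ℝ} (ht : |t| ≤ 1) :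
    evenProfile g (t ^ 2) = g t := by
  have hproj : Set.projIcc 0 1 zero_le_one |t| = ⟨|t|, abs_nonneg t, ht⟩ :=
    Set.projIcc_of_mem _ _
  rw [evenProfile, sqrt_sq_eq_abs, hproj]
  rcases abs_choice t with h | h <;> simp only [h, hg]

theorem monotone_evenProfile (hg : MonotoneOn g (Set.Icc 0 1)) : Monotone (evenProfile g) :=
  fun _ _ h => hg (Set.projIcc _ _ _ _).2 (Set.projIcc _ _ _ _).2
    (Set.monotone_projIcc _ (sqrt_le_sqrt h))

end evenProfile

noncomputable def sphericalCoords (x : Fin 2 → ℝ) : ℝ³ :=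
  !₂[sin (x 0) * cos (x 1), sin (x 0) * sin (x 1), cos (x 0)]

theorem contDiff_sphericalCoords : ContDiff ℝ 1 sphericalCoords := by
  rw [contDiff_piLp]
  intro i
  fin_cases i <;>
    simp only [sphericalCoords, Fin.isValue, Fin.zero_eta, Fin.mk_one, Fin.reduceFinMk,
      Matrix.cons_val] <;>
    fun_prop

theorem sphere_subset_image_sphericalCoords :
    Metric.sphere (0 : ℝ³) 1 ⊆ sphericalCoords '' Set.Icc (fun _ => -π) (fun _ => π) := by
  intro y hy
  have hnorm : y 0 ^ 2 + y 1 ^ 2 + y 2 ^ 2 = 1 := by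
    have := EuclideanSpace.norm_sq_eq y
    simp_all [Fin.sum_univ_three]
  set z : ℂ := ⟨y 0, y 1⟩
  have hz : ‖z‖ = √(1 - y 2 ^ 2) := by
    rw [Complex.norm_def, Complex.normSq_apply]; congr 1; simp only [z]; linarith
  have hy2 : y 2 ∈ Set.Icc (-1) 1 := by
    rw [Set.mem_Icc, ← abs_le, ← sq_le_one_iff_abs_le_one]; nlinarith
  refine ⟨![arccos (y 2), z.arg], ⟨Fin.forall_fin_two.2 ⟨?_, (Complex.neg_pi_lt_arg z).le⟩,
    Fin.forall_fin_two.2 ⟨arccos_le_pi _, Complex.arg_le_pi z⟩⟩, ?_⟩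
  · exact (neg_nonpos.2 pi_pos.le).trans (arccos_nonneg _)
  · ext i
    fin_cases i
    · simp [sphericalCoords, sin_arccos, ← hz, Complex.norm_mul_cos_arg, z]
    · simp [sphericalCoords, sin_arccos, ← hz, Complex.norm_mul_sin_arg, z]
    · simp [sphericalCoords, cos_arccos hy2.1 hy2.2]

theorem hausdorffMeasure_sphere_lt_top : μH[2] (Metric.sphere (0 : ℝ³) 1) < ⊤ :=
  (measure_mono sphere_subset_image_sphericalCoords).trans_lt <| by
    simpa using hausdorffMeasure_image_lt_top_of_contDiff contDiff_sphericalCoords isCompact_Icc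

noncomputable def unitXZ (α : ℝ) : ℝ³ := (WithLp.equiv 2 (Fin 3 → ℝ)).symm ![sin α, 0, cos α]

theorem inner_unitXZ (y : ℝ³) (α : ℝ) : ⟪y, unitXZ α⟫ = y 0 * sin α + y 2 * cos α := by
  simp only [unitXZ, WithLp.equiv_symm_apply, PiLp.inner_apply, RCLike.inner_apply,
    ringHom_apply, Fin.sum_univ_three, Fin.isValue, Matrix.cons_val_zero, Matrix.cons_val_one,
    Matrix.cons_val, zero_mul, add_zero]
  ring

theorem norm_unitXZ (α : ℝ) : ‖unitXZ α‖ = 1 := by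
  simp [EuclideanSpace.norm_eq, unitXZ, Fin.sum_univ_three]

theorem unitXZ_zero : unitXZ 0 = (WithLp.equiv 2 (Fin 3 → ℝ)).symm ![0, 0, 1] := by
  simp [unitXZ]

theorem abs_inner_unitXZ_le_one {y : ℝ³} (hy : y ∈ Metric.sphere 0 1) (α : ℝ) :
    |⟪y, unitXZ α⟫| ≤ 1 := by
  simpa [norm_unitXZ, mem_sphere_zero_iff_norm.1 hy] using abs_real_inner_le_norm y (unitXZ α)

/-- The reflection of the xz-plane in the line at angle `ψ / 2` from the z-axis. -/
noncomputable def reflXZ (ψ : ℝ) : ℝ³ ≃ₗᵢ[ℝ] ℝ³ :=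
  LinearIsometry.toLinearIsometryEquiv
    { toFun y := !₂[-cos ψ * y 0 + sin ψ * y 2, y 1, sin ψ * y 0 + cos ψ * y 2]
      map_add' x y := by
        ext i
        fin_cases i <;>
          simp only [Fin.isValue, Fin.zero_eta, Fin.mk_one, Fin.reduceFinMk, Matrix.cons_val,
            PiLp.add_apply] <;>
          ring
      map_smul' c x := by
        ext i
        fin_cases i <;>
          simp only [Fin.isValue, Fin.zero_eta, Fin.mk_one, Fin.reduceFinMk, Matrix.cons_val,
            PiLp.smul_apply, smul_eq_mul, RingHom.id_apply] <;>
          ring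
      norm_map' y := by
        simp only [EuclideanSpace.norm_eq, Fin.sum_univ_three, LinearMap.coe_mk, AddHom.coe_mk,
          Fin.isValue, Matrix.cons_val, norm_eq_abs, sq_abs]
        congr 1
        linear_combination (y 0 ^ 2 + y 2 ^ 2) * sin_sq_add_cos_sq ψ }
    rfl

theorem inner_reflXZ_unitXZ (ψ α : ℝ) (y : ℝ³) :
    ⟪reflXZ ψ y, unitXZ α⟫ = ⟪y, unitXZ (ψ - α)⟫ := by
  simp only [reflXZ, LinearIsometry.toLinearIsometryEquiv_apply, LinearIsometry.coe_mk,
    LinearMap.coe_mk, AddHom.coe_mk, inner_unitXZ, Fin.isValue, Matrix.cons_val_zero,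
    Matrix.cons_val, sin_sub, cos_sub]
  ring

theorem inner_unitXZ_sq_sub_inner_unitXZ_sq (y : ℝ³) (α β : ℝ) :
    ⟪y, unitXZ α⟫ ^ 2 - ⟪y, unitXZ β⟫ ^ 2 =
      sin (α - β) * (2 * y 0 * y 2 * cos (α + β) - (y 2 ^ 2 - y 0 ^ 2) * sin (α + β)) := by
  rw [inner_unitXZ, inner_unitXZ, sin_sub, sin_add, cos_add]
  linear_combination (y 2 ^ 2 + 2 * y 0 * y 2 * sin β * cos β - (y 2 ^ 2 - y 0 ^ 2) * sin β ^ 2) *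
      sin_sq_add_cos_sq α +
    (-y 2 ^ 2 - 2 * y 0 * y 2 * sin α * cos α + (y 2 ^ 2 - y 0 ^ 2) * sin α ^ 2) *
      sin_sq_add_cos_sq β

theorem inner_unitXZ_sq_sub_mul_nonneg (y : ℝ³) {φ φ' : ℝ} (hφ : 0 ≤ φ) (hφφ' : φ ≤ φ')
    (hφ' : φ' ≤ π / 2) :
    0 ≤ (⟪y, unitXZ φ⟫ ^ 2 - ⟪y, unitXZ φ'⟫ ^ 2) *
      (⟪y, unitXZ 0⟫ ^ 2 - ⟪y, unitXZ (φ + φ')⟫ ^ 2) := by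
  rw [inner_unitXZ_sq_sub_inner_unitXZ_sq, inner_unitXZ_sq_sub_inner_unitXZ_sq, zero_add,
    zero_sub, sin_neg, ← neg_sub φ' φ, sin_neg]
  set W := 2 * y 0 * y 2 * cos (φ + φ') - (y 2 ^ 2 - y 0 ^ 2) * sin (φ + φ')
  have h₁ : 0 ≤ sin (φ' - φ) := sin_nonneg_of_nonneg_of_le_pi (by linarith) (by linarith)
  have h₂ : 0 ≤ sin (φ + φ') := sin_nonneg_of_nonneg_of_le_pi (by linarith) (by linarith)
  linarith [mul_nonneg (mul_nonneg h₁ h₂) (sq_nonneg W)]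

noncomputable def zonalProduct (G₁ G₂ : ℝ → ℝ) (α : ℝ) (y : ℝ³) : ℝ :=
  G₁ (⟪y, unitXZ α⟫ ^ 2) * G₂ (⟪y, unitXZ 0⟫ ^ 2)

section zonalProduct

variable {G₁ G₂ : ℝ → ℝ}

theorem zonalProduct_add_comp_reflXZ_le (hG₁ : Monotone G₁) (hG₂ : Monotone G₂) (y : ℝ³)
    {φ φ' : ℝ} (hφ : 0 ≤ φ) (hφφ' : φ ≤ φ') (hφ' : φ' ≤ π / 2) :
    zonalProduct G₁ G₂ φ' y + zonalProduct G₁ G₂ φ' (reflXZ (φ + φ') y) ≤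
      zonalProduct G₁ G₂ φ y + zonalProduct G₁ G₂ φ (reflXZ (φ + φ') y) := by
  have key := sub_mul_sub_nonneg_of_monotone hG₁ hG₂
    (inner_unitXZ_sq_sub_mul_nonneg y hφ hφφ' hφ')
  simp only [zonalProduct, inner_reflXZ_unitXZ, sub_zero, add_sub_cancel_right,
    add_sub_cancel_left] at key ⊢
  linarith

theorem integrable_zonalProduct (hG₁ : Monotone G₁) (hG₂ : Monotone G₂) (α : ℝ) :
    Integrable (zonalProduct G₁ G₂ α) (μH[2].restrict (Metric.sphere (0 : ℝ³) 1)) := by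
  have := isFiniteMeasure_restrict.2 hausdorffMeasure_sphere_lt_top.ne
  have hmeas : Measurable (zonalProduct G₁ G₂ α) := by
    have := hG₁.measurable
    have := hG₂.measurable
    unfold zonalProduct
    fun_prop
  refine .of_bound hmeas.aestronglyMeasurable (max |G₁ 0| |G₁ 1| * max |G₂ 0| |G₂ 1|)
    ((ae_restrict_iff' Metric.isClosed_sphere.measurableSet).2 (ae_of_all _ fun y hy => ?_))
  have hsq : ∀ β, ⟪y, unitXZ β⟫ ^ 2 ∈ Set.Icc 0 1 := fun β =>
    ⟨sq_nonneg _, sq_le_one_iff_abs_le_one _ |>.2 (abs_inner_unitXZ_le_one hy β)⟩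
  rw [zonalProduct, norm_mul]
  exact mul_le_mul (abs_le_max_abs_abs (hG₁ (hsq α).1) (hG₁ (hsq α).2))
    (abs_le_max_abs_abs (hG₂ (hsq 0).1) (hG₂ (hsq 0).2)) (abs_nonneg _)
    ((abs_nonneg _).trans (le_max_left _ _))

end zonalProduct

theorem setIntegral_sphere_eq_integral_zonalProduct {g₁ g₂ : ℝ → ℝ}
    (h₁even : ∀ t, g₁ (-t) = g₁ t) (h₂even : ∀ t, g₂ (-t) = g₂ t) (α : ℝ) :
    ∫ y in Metric.sphere (0 : ℝ³) 1,
        g₁ ⟪y, unitXZ α⟫ * g₂ ⟪y, (WithLp.equiv 2 (Fin 3 → ℝ)).symm ![0, 0, 1]⟫ ∂μH[2] =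
      ∫ y in Metric.sphere (0 : ℝ³) 1,
        zonalProduct (evenProfile g₁) (evenProfile g₂) α y ∂μH[2] := by
  refine setIntegral_congr_fun Metric.isClosed_sphere.measurableSet fun y hy => ?_
  rw [zonalProduct, evenProfile_sq h₁even (abs_inner_unitXZ_le_one hy α),
    evenProfile_sq h₂even (abs_inner_unitXZ_le_one hy 0), unitXZ_zero]

theorem sphere_integral_antitone_general (g₁ g₂ : ℝ → ℝ)
    (h₁even : ∀ t, g₁ (-t) = g₁ t) (h₂even : ∀ t, g₂ (-t) = g₂ t)
    (h₁mono : MonotoneOn g₁ (Set.Icc 0 1)) (h₂mono : MonotoneOn g₂ (Set.Icc 0 1)) :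
    AntitoneOn
      (fun φ : ℝ =>
        ∫ y in Metric.sphere (0 : EuclideanSpace ℝ (Fin 3)) 1,
          g₁ ⟪y, (WithLp.equiv 2 (Fin 3 → ℝ)).symm ![Real.sin φ, 0, Real.cos φ]⟫ *
          g₂ ⟪y, (WithLp.equiv 2 (Fin 3 → ℝ)).symm ![0, 0, 1]⟫
          ∂(μH[2]))
      (Set.Icc 0 (π / 2)) := by
  intro φ hφ φ' hφ' hφφ'
  have hG₁ := monotone_evenProfile h₁mono
  have hG₂ := monotone_evenProfile h₂mono
  change ∫ y in _, g₁ ⟪y, unitXZ φ'⟫ * _ ∂_ ≤ ∫ y in _, g₁ ⟪y, unitXZ φ⟫ * _ ∂_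
  rw [setIntegral_sphere_eq_integral_zonalProduct h₁even h₂even,
    setIntegral_sphere_eq_integral_zonalProduct h₁even h₂even]
  exact integral_le_integral_of_add_comp_le
    ((reflXZ (φ + φ')).measurePreserving_hausdorffMeasure_restrict_sphere 2 1)
    (integrable_zonalProduct hG₁ hG₂ φ') (integrable_zonalProduct hG₁ hG₂ φ)
    fun y => zonalProduct_add_comp_reflXZ_le hG₁ hG₂ y hφ.1 hφφ' hφ'.2

theorem sphere_integral_antitone (g₁ g₂ : ℝ → ℝ)
    (h₁even : ∀ t, g₁ (-t) = g₁ t) (h₂even : ∀ t, g₂ (-t) = g₂ t)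
    (h₁nonneg : ∀ t ∈ Set.Icc (-1:ℝ) 1, 0 ≤ g₁ t)
    (h₂nonneg : ∀ t ∈ Set.Icc (-1:ℝ) 1, 0 ≤ g₂ t)
    (h₁mono : MonotoneOn g₁ (Set.Icc 0 1)) (h₂mono : MonotoneOn g₂ (Set.Icc 0 1)) :
    AntitoneOn
      (fun φ : ℝ =>
        ∫ y in Metric.sphere (0 : EuclideanSpace ℝ (Fin 3)) 1,
          g₁ ⟪y, (WithLp.equiv 2 (Fin 3 → ℝ)).symm ![Real.sin φ, 0, Real.cos φ]⟫ *
          g₂ ⟪y, (WithLp.equiv 2 (Fin 3 → ℝ)).symm ![0, 0, 1]⟫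
          ∂(μH[2]))
      (Set.Icc 0 (π / 2)) :=
  sphere_integral_antitone_general g₁ g₂ h₁even h₂even h₁mono h₂mono
end

section
/- For 0 < s < 1 and t > 1, define G(t) = C₁R₁^{2+s} ∫_{−1}^{1} (−s R₁^{−s−2}(t−y)^{−s−1} + 2(t−y)) (1−y²)^{(1+s)/2} dy, where C₁R₁^{2+s} = 1/β(1/2,(3+s)/2) and s R₁^{−s−2} = (2cos(sπ/2)/((s+1)π)) β(1/2,(3+s)/2). Then both prefactors extend to functions of s that are well-defined and such that the coefficient −s R₁^{−s−2} = −(2cos(sπ/2)/((s+1)π)) β(1/2,(3+s)/2) is nonnegative for 1 ≤ s ≤ 3 (since cos(sπ/2) ≤ 0 there); consequently G(t) > 0 for all t > 1 and 1 ≤ s < 3. -/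
/-!
The Beta value `B = Γ(1/2)Γ((3+s)/2)/Γ(2+s/2)` is positive and `cos (sπ/2) ≤ 0` for `1 ≤ s ≤ 3`,
so the coefficient of the singular term `(t - y)^(-s-1)` is nonnegative. For `t > 1` the integrand
is then a sum of a nonnegative and a positive term times the positive weight `(1 - y²)^((1+s)/2)`,
so the integral is positive.
-/

open Real Set

lemma gamma_mul_gamma_div_gamma_add_pos {a b : ℝ} (ha : 0 < a) (hb : 0 < b) :
    0 < Gamma a * Gamma b / Gamma (a + b) :=
  div_pos (mul_pos (Gamma_pos_of_pos ha) (Gamma_pos_of_pos hb)) (Gamma_pos_of_pos (by linarith))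

lemma cos_mul_pi_div_two_nonpos {s : ℝ} (hs1 : 1 ≤ s) (hs3 : s ≤ 3) : cos (s * π / 2) ≤ 0 :=
  cos_nonpos_of_pi_div_two_le_of_le (by nlinarith [pi_pos]) (by nlinarith [pi_pos])

lemma intervalIntegral_mul_one_sub_sq_rpow_pos {f : ℝ → ℝ} {q : ℝ} (hq : 0 ≤ q)
    (hf : ContinuousOn f (Icc (-1) 1)) (hf_pos : ∀ y ∈ Ioo (-1 : ℝ) 1, 0 < f y) :
    0 < ∫ y in (-1 : ℝ)..1, f y * (1 - y ^ 2) ^ q := by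
  refine intervalIntegral.intervalIntegral_pos_of_pos_on ?_ (fun y hy => ?_) (by norm_num)
  · refine ContinuousOn.intervalIntegrable ?_
    rw [uIcc_of_le (by norm_num)]
    exact hf.mul (ContinuousOn.rpow_const (by fun_prop) fun _ _ => Or.inr hq)
  · have hweight : 0 < 1 - y ^ 2 := by nlinarith [hy.1, hy.2]
    exact mul_pos (hf_pos y hy) (rpow_pos_of_pos hweight q)

lemma continuousOn_const_mul_sub_rpow_add {t c p a : ℝ} (ht : 1 < t) :
    ContinuousOn (fun y => c * (t - y) ^ p + a * (t - y)) (Icc (-1) 1) := by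
  refine ContinuousOn.add (continuousOn_const.mul (ContinuousOn.rpow_const (by fun_prop)
    fun y hy => Or.inl ?_)) (by fun_prop)
  linarith [hy.2]

lemma const_mul_sub_rpow_add_pos {t y c p a : ℝ} (hc : 0 ≤ c) (ha : 0 < a) (hy : y < t) :
    0 < c * (t - y) ^ p + a * (t - y) := by
  have hty : 0 < t - y := sub_pos.mpr hy
  have hsingular : 0 ≤ c * (t - y) ^ p := mul_nonneg hc (rpow_nonneg hty.le p)
  nlinarith

theorem G_positive (s : ℝ) (hs1 : 1 ≤ s) (hs3 : s < 3)
    (B : ℝ) (hB : B = Real.Gamma (1/2) * Real.Gamma ((3 + s)/2) /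
      Real.Gamma (1/2 + (3 + s)/2))
    (G : ℝ → ℝ)
    (hG : ∀ t, G t = B⁻¹ * ∫ y in (-1:ℝ)..1,
      (-(2 * Real.cos (s * π / 2) / ((s + 1) * π) * B) * (t - y) ^ (-s - 1)
        + 2 * (t - y)) * (1 - y ^ 2) ^ ((1 + s) / 2)) :
    0 ≤ -(2 * Real.cos (s * π / 2) / ((s + 1) * π) * B) ∧
    ∀ t : ℝ, 1 < t → 0 < G t := by
  have hB_pos : 0 < B := hB ▸ gamma_mul_gamma_div_gamma_add_pos (by norm_num) (by linarith)
  have hcos : cos (s * π / 2) ≤ 0 := cos_mul_pi_div_two_nonpos hs1 hs3.le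
  have hcoef : 0 ≤ -(2 * cos (s * π / 2) / ((s + 1) * π) * B) := by
    rw [neg_nonneg]
    refine mul_nonpos_of_nonpos_of_nonneg (div_nonpos_of_nonpos_of_nonneg (by linarith) ?_) hB_pos.le
    have : 0 < s + 1 := by linarith
    positivity
  refine ⟨hcoef, fun t ht => ?_⟩
  rw [hG t]
  refine mul_pos (inv_pos.mpr hB_pos) (intervalIntegral_mul_one_sub_sq_rpow_pos (by linarith)
    (continuousOn_const_mul_sub_rpow_add ht) fun y hy => ?_)
  exact const_mul_sub_rpow_add_pos hcoef two_pos (by linarith [hy.2])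
end

section
/- Fix T > 1. For real t with 1 < t ≤ T and real s with 1 ≤ s < 3, the integral ∫_{−1}^{1} (t−y)^{−s−1} (1−y)^{(1+s)/2} dy is bounded by C(T,s) (t−1)^{(1−s)/2} (1 + |log(t−1)|), where C depends only on T and is uniform for s in compact subsets of [1,3). -/
open Real

theorem singular_integral_estimate (T : ℝ) (hT : 1 < T) (s₀ : ℝ)
    (hs₀1 : 1 ≤ s₀) (hs₀3 : s₀ < 3) :
    ∃ C : ℝ, 0 < C ∧ ∀ s : ℝ, 1 ≤ s → s ≤ s₀ → ∀ t : ℝ, 1 < t → t ≤ T →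
      (∫ y in (-1:ℝ)..1, (t - y) ^ (-s - 1) * (1 - y) ^ ((1 + s) / 2)) ≤
        C * (t - 1) ^ ((1 - s) / 2) * (1 + |Real.log (t - 1)|) := by
  refine ⟨1 + Real.log (T + 1), by have := Real.log_nonneg (by linarith : (1:ℝ) ≤ T + 1); linarith, ?_⟩
  intro s hs1 hs2 t ht1 htT
  set ε := t - 1 with hε
  have hε0 : 0 < ε := by simp [hε]; linarith
  set A := ε ^ ((1 - s) / 2) with hA
  have hA0 : 0 ≤ A := by positivity
  -- pointwise bound
  have hpt : ∀ y ∈ Set.Icc (-1:ℝ) 1,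
      (t - y) ^ (-s - 1) * (1 - y) ^ ((1 + s) / 2) ≤ A * (t - y)⁻¹ := by
    intro y hy
    obtain ⟨hy1, hy2⟩ := hy
    have hty : 0 < t - y := by linarith
    have h1y : 0 ≤ 1 - y := by linarith
    have step1 : (1 - y) ^ ((1 + s) / 2) ≤ (t - y) ^ ((1 + s) / 2) :=
      Real.rpow_le_rpow h1y (by linarith) (by linarith)
    calc (t - y) ^ (-s - 1) * (1 - y) ^ ((1 + s) / 2)
        ≤ (t - y) ^ (-s - 1) * (t - y) ^ ((1 + s) / 2) := by
          apply mul_le_mul_of_nonneg_left step1 (Real.rpow_nonneg hty.le _)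
      _ = (t - y) ^ ((1 - s) / 2) * (t - y)⁻¹ := by
          rw [← Real.rpow_add hty, ← Real.rpow_neg_one (t - y), ← Real.rpow_add hty]
          ring_nf
      _ ≤ A * (t - y)⁻¹ := by
          apply mul_le_mul_of_nonneg_right _ (by positivity)
          exact Real.rpow_le_rpow_of_nonpos hε0 (by linarith) (by linarith)
  -- integrability
  have hf : IntervalIntegrable (fun y => (t - y) ^ (-s - 1) * (1 - y) ^ ((1 + s) / 2))
      MeasureTheory.volume (-1) 1 := by
    apply ContinuousOn.intervalIntegrable
    apply ContinuousOn.mul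
    · apply ContinuousOn.rpow_const (by fun_prop)
      intro y hy
      rw [Set.uIcc_of_le (by norm_num)] at hy
      left; intro h; have := hy.2; nlinarith [hy.2]
    · apply ContinuousOn.rpow_const (by fun_prop)
      intro y hy
      right; linarith
  have hg : IntervalIntegrable (fun y => A * (t - y)⁻¹) MeasureTheory.volume (-1) 1 := by
    apply ContinuousOn.intervalIntegrable
    apply ContinuousOn.mul continuousOn_const
    apply ContinuousOn.inv₀ (by fun_prop)
    intro y hy
    rw [Set.uIcc_of_le (by norm_num)] at hy
    have := hy.2; intro h; nlinarith
  have hmono := intervalIntegral.integral_mono_on (by norm_num : (-1:ℝ) ≤ 1) hf hg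
    (fun y hy => hpt y hy)
  -- compute the integral of the majorant
  have hint : (∫ y in (-1:ℝ)..1, A * (t - y)⁻¹) = A * (Real.log (t + 1) - Real.log ε) := by
    rw [intervalIntegral.integral_const_mul]
    congr 1
    have : ∀ y ∈ Set.uIcc (-1:ℝ) 1, HasDerivAt (fun y => -Real.log (t - y)) (t - y)⁻¹ y := by
      intro y hy
      rw [Set.uIcc_of_le (by norm_num)] at hy
      have hty : t - y ≠ 0 := by have := hy.2; intro h; nlinarith
      have h1 : HasDerivAt (fun y : ℝ => t - y) (-1) y := by
        simpa using (hasDerivAt_id y).const_sub t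
      have := (Real.hasDerivAt_log hty).comp y h1
      have h2 := this.neg
      rw [show (t - y)⁻¹ = -((t - y)⁻¹ * -1) by ring]
      exact h2
    rw [intervalIntegral.integral_eq_sub_of_hasDerivAt this]
    · simp [hε]; ring
    · apply ContinuousOn.intervalIntegrable
      apply ContinuousOn.inv₀ (by fun_prop)
      intro y hy
      rw [Set.uIcc_of_le (by norm_num)] at hy
      have := hy.2; intro h; nlinarith
  -- final comparison
  have hlogT : Real.log (t + 1) ≤ Real.log (T + 1) := by
    apply Real.log_le_log (by linarith) (by linarith)
  have hlogT0 : 0 ≤ Real.log (T + 1) := Real.log_nonneg (by linarith)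
  have habs : -Real.log ε ≤ |Real.log ε| := neg_le_abs _
  have : A * (Real.log (t + 1) - Real.log ε) ≤
      (1 + Real.log (T + 1)) * A * (1 + |Real.log ε|) := by
    have h1 : Real.log (t + 1) - Real.log ε ≤ (1 + Real.log (T + 1)) * (1 + |Real.log ε|) := by
      nlinarith [abs_nonneg (Real.log ε)]
    calc A * (Real.log (t + 1) - Real.log ε)
        ≤ A * ((1 + Real.log (T + 1)) * (1 + |Real.log ε|)) :=
          mul_le_mul_of_nonneg_left h1 hA0
      _ = (1 + Real.log (T + 1)) * A * (1 + |Real.log ε|) := by ring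
  calc (∫ y in (-1:ℝ)..1, (t - y) ^ (-s - 1) * (1 - y) ^ ((1 + s) / 2))
      ≤ ∫ y in (-1:ℝ)..1, A * (t - y)⁻¹ := hmono
    _ = A * (Real.log (t + 1) - Real.log ε) := hint
    _ ≤ (1 + Real.log (T + 1)) * A * (1 + |Real.log ε|) := this
end
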